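/- arXiv:0804.1188 — 12 statements merged into one kernel-verified Lean document; each statement's English description precedes it below -/
import Mathlib

section
/- Let C be a finite-dimensional real Euclidean space with distinguished unit vector 1, V a real Euclidean space, and J : C × V → V a bilinear map with J(1,v) = v and |J(ζ,v)| = |ζ||v| for all ζ, v. Then for every z in the orthogonal complement C' of ℝ1 in C, the map J_z is skew-symmetric, and for every ζ ∈ C, writing ζ̄ = 2⟨ζ,1⟩1 − ζ, one has J_{ζ̄} ∘ J_ζ = |ζ|² · id on V. -/
open scoped RealInnerProductSpace

theorem stmt0 {C V : Type*} [NormedAddCommGroup C] [InnerProductSpace ℝ C]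
    [FiniteDimensional ℝ C] [NormedAddCommGroup V] [InnerProductSpace ℝ V]
    (e : C) (he : ‖e‖ = 1) (J : C →ₗ[ℝ] V →ₗ[ℝ] V)
    (hJ1 : ∀ v : V, J e v = v)
    (hJnorm : ∀ (ζ : C) (v : V), ‖J ζ v‖ = ‖ζ‖ * ‖v‖) :
    (∀ z ∈ (Submodule.span ℝ {e})ᗮ, ∀ u v : V, ⟪J z u, v⟫ = -⟪u, J z v⟫) ∧
    (∀ (ζ : C) (v : V), J ((2 * ⟪ζ, e⟫) • e - ζ) (J ζ v) = (‖ζ‖ ^ 2) • v) := by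
  have hself : ∀ (ζ : C) (w : V), ⟪J ζ w, J ζ w⟫ = ‖ζ‖ ^ 2 * ⟪w, w⟫ := by
    intro ζ w
    rw [real_inner_self_eq_norm_sq, real_inner_self_eq_norm_sq, hJnorm]
    ring
  have A : ∀ (ζ : C) (u v : V), ⟪J ζ u, J ζ v⟫ = ‖ζ‖ ^ 2 * ⟪u, v⟫ := by
    intro ζ u v
    have h := hself ζ (u + v)
    rw [map_add, real_inner_add_add_self, real_inner_add_add_self, hself, hself] at h
    linarith
  have B : ∀ (ζ η : C) (u v : V),
      ⟪J ζ u, J η v⟫ + ⟪J η u, J ζ v⟫ = 2 * ⟪ζ, η⟫ * ⟪u, v⟫ := by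
    intro ζ η u v
    have h := A (ζ + η) u v
    rw [map_add, LinearMap.add_apply, LinearMap.add_apply, inner_add_left, inner_add_right,
      inner_add_right, A, A, norm_add_sq_real] at h
    nlinarith [A ζ u v, A η u v]
  have key : ∀ (ζ : C) (u v : V), ⟪J ζ u, v⟫ + ⟪u, J ζ v⟫ = 2 * ⟪ζ, e⟫ * ⟪u, v⟫ := by
    intro ζ u v
    have h := B ζ e u v
    rw [hJ1, hJ1] at h
    linarith
  constructor
  · intro z hz u v
    have hze : ⟪e, z⟫ = 0 := hz e (Submodule.mem_span_singleton_self e)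
    have hze' : ⟪z, e⟫ = 0 := by rw [real_inner_comm]; exact hze
    have h := key z u v
    rw [hze'] at h
    linarith
  · intro ζ v
    apply ext_inner_right ℝ
    intro w
    have h1 : J ((2 * ⟪ζ, e⟫) • e - ζ) (J ζ v)
        = (2 * ⟪ζ, e⟫) • (J ζ v) - J ζ (J ζ v) := by
      rw [map_sub, map_smul, LinearMap.sub_apply, LinearMap.smul_apply, hJ1]
    rw [h1, inner_sub_left, real_inner_smul_left, real_inner_smul_left]
    have h2 := key ζ (J ζ v) w
    have h3 := A ζ v w
    linarith
end

section
/- Let (C,V,J) be a C-module structure (J bilinear, J(1,v)=v, |J(ζ,v)|=|ζ||v|). Then polarization gives the identity ⟨J(ζ,u), J(η,v)⟩ + ⟨J(η,u), J(ζ,v)⟩ = 2⟨ζ,η⟩⟨u,v⟩ for all ζ,η ∈ C and u,v ∈ V. -/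
open scoped RealInnerProductSpace

theorem stmt1 {C V : Type*} [NormedAddCommGroup C] [InnerProductSpace ℝ C]
    [FiniteDimensional ℝ C] [NormedAddCommGroup V] [InnerProductSpace ℝ V]
    (e : C) (he : ‖e‖ = 1) (J : C →ₗ[ℝ] V →ₗ[ℝ] V)
    (hJ1 : ∀ v : V, J e v = v)
    (hJnorm : ∀ (ζ : C) (v : V), ‖J ζ v‖ = ‖ζ‖ * ‖v‖) :
    ∀ (ζ η : C) (u v : V),
      ⟪J ζ u, J η v⟫ + ⟪J η u, J ζ v⟫ = 2 * ⟪ζ, η⟫ * ⟪u, v⟫ := by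
  have h1 : ∀ (ξ : C) (v : V), ⟪J ξ v, J ξ v⟫ = ⟪ξ, ξ⟫ * ⟪v, v⟫ := by
    intro ξ v
    rw [real_inner_self_eq_norm_mul_norm, real_inner_self_eq_norm_mul_norm,
      real_inner_self_eq_norm_mul_norm, hJnorm]
    ring
  have key : ∀ (ζ η : C) (v : V), ⟪J ζ v, J η v⟫ = ⟪ζ, η⟫ * ⟪v, v⟫ := by
    intro ζ η v
    have h2 := h1 (ζ + η) v
    simp only [map_add, LinearMap.add_apply, inner_add_left, inner_add_right] at h2
    have hs1 : ⟪J η v, J ζ v⟫ = ⟪J ζ v, J η v⟫ := real_inner_comm _ _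
    have hs2 : (⟪η, ζ⟫ : ℝ) = ⟪ζ, η⟫ := real_inner_comm _ _
    linear_combination (h2 - h1 ζ v - h1 η v - hs1 + hs2 * ⟪v, v⟫) / 2
  intro ζ η u v
  have h2 := key ζ η (u + v)
  simp only [map_add, inner_add_left, inner_add_right] at h2
  have hs1 : ⟪J ζ v, J η u⟫ = ⟪J η u, J ζ v⟫ := real_inner_comm _ _
  have hs2 : (⟪v, u⟫ : ℝ) = ⟪u, v⟫ := real_inner_comm _ _
  linear_combination h2 - key ζ η u - key ζ η v - hs1 + ⟪ζ, η⟫ * hs2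
end

section
/- Let (C,V,J) be a C-module satisfying the J²-condition, meaning C·(C·v) = C·v for every v ∈ V, and let v ∈ V be nonzero. Define a multiplication on C by (ζ ·_v η)·v = ζ·(η·v) (well-defined since ζ ↦ ζ·v is a bijection from C onto C·v). Then (C, ·_v) is a normed division algebra: the product is bilinear with identity 1, satisfies |ζ ·_v η| = |ζ||η|, and for every η ≠ 0 and ζ the equations ξ ·_v η = ζ and η ·_v ξ' = ζ have solutions ξ, ξ'. -/
open scoped RealInnerProductSpace

theorem stmt3 {C V : Type*} [NormedAddCommGroup C] [InnerProductSpace ℝ C]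
    [FiniteDimensional ℝ C] [NormedAddCommGroup V] [InnerProductSpace ℝ V]
    (e : C) (he : ‖e‖ = 1) (J : C →ₗ[ℝ] V →ₗ[ℝ] V)
    (hJ1 : ∀ v : V, J e v = v)
    (hJnorm : ∀ (ζ : C) (v : V), ‖J ζ v‖ = ‖ζ‖ * ‖v‖)
    (hJ2 : ∀ (v : V) (ζ η : C), ∃ ξ : C, J ζ (J η v) = J ξ v)
    (v : V) (hv : v ≠ 0)
    (mul : C → C → C)
    (hmul : ∀ ζ η : C, J (mul ζ η) v = J ζ (J η v)) :
    (∀ η : C, mul e η = η) ∧ (∀ ζ : C, mul ζ e = ζ) ∧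
    (∀ (a : ℝ) (ζ ζ' η : C), mul (a • ζ + ζ') η = a • mul ζ η + mul ζ' η) ∧
    (∀ (a : ℝ) (ζ η η' : C), mul ζ (a • η + η') = a • mul ζ η + mul ζ η') ∧
    (∀ ζ η : C, ‖mul ζ η‖ = ‖ζ‖ * ‖η‖) ∧
    (∀ ζ η : C, η ≠ 0 → (∃ ξ : C, mul ξ η = ζ) ∧ (∃ ξ' : C, mul η ξ' = ζ)) := by
  have hvn : ‖v‖ ≠ 0 := norm_ne_zero_iff.mpr hv
  have hinj : ∀ ζ η : C, J ζ v = J η v → ζ = η := by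
    intro ζ η h
    have h0 : J (ζ - η) v = 0 := by
      have := J.map_sub ζ η
      have : J (ζ - η) v = J ζ v - J η v := by rw [J.map_sub]; rfl
      rw [this, h, sub_self]
    have : ‖ζ - η‖ * ‖v‖ = 0 := by rw [← hJnorm, h0, norm_zero]
    have := mul_eq_zero.mp this
    rcases this with h' | h'
    · exact sub_eq_zero.mp (norm_eq_zero.mp h')
    · exact absurd h' hvn
  have h1 : ∀ η : C, mul e η = η := by
    intro η; exact hinj _ _ (by rw [hmul, hJ1])
  have h2 : ∀ ζ : C, mul ζ e = ζ := by
    intro ζ; exact hinj _ _ (by rw [hmul, hJ1])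
  have h3 : ∀ (a : ℝ) (ζ ζ' η : C), mul (a • ζ + ζ') η = a • mul ζ η + mul ζ' η := by
    intro a ζ ζ' η
    apply hinj
    rw [hmul]
    simp only [map_add, map_smul, hmul, LinearMap.add_apply, LinearMap.smul_apply]
  have h4 : ∀ (a : ℝ) (ζ η η' : C), mul ζ (a • η + η') = a • mul ζ η + mul ζ η' := by
    intro a ζ η η'
    apply hinj
    rw [hmul]
    simp only [map_add, map_smul, hmul, LinearMap.add_apply, LinearMap.smul_apply]
  have h5 : ∀ ζ η : C, ‖mul ζ η‖ = ‖ζ‖ * ‖η‖ := by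
    intro ζ η
    have : ‖mul ζ η‖ * ‖v‖ = ‖ζ‖ * ‖η‖ * ‖v‖ := by
      rw [← hJnorm, hmul, hJnorm, hJnorm]; ring
    exact mul_right_cancel₀ hvn this
  refine ⟨h1, h2, h3, h4, h5, ?_⟩
  intro ζ η hη
  have hsurj : ∀ (T : C →ₗ[ℝ] C), Function.Injective T → Function.Surjective T := by
    intro T hT
    exact (LinearMap.injective_iff_surjective).mp hT
  constructor
  · let T : C →ₗ[ℝ] C :=
      { toFun := fun ξ => mul ξ η
        map_add' := by
          intro x y
          have := h3 1 x y η
          simpa using this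
        map_smul' := by
          intro a x
          have := h3 a x 0 η
          have hz : mul (0 : C) η = 0 := by
            have hn := h5 0 η
            rw [norm_zero, zero_mul] at hn
            exact norm_eq_zero.mp hn
          simpa [hz] using this }
    have hTinj : Function.Injective T := by
      intro x y hxy
      have : T (x - y) = 0 := by rw [map_sub, hxy, sub_self]
      have hn : ‖x - y‖ * ‖η‖ = 0 := by
        have : ‖mul (x - y) η‖ = 0 := by
          simpa [T] using congrArg norm this
        rwa [h5] at this
      rcases mul_eq_zero.mp hn with h' | h'
      · exact sub_eq_zero.mp (norm_eq_zero.mp h')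
      · exact absurd (norm_eq_zero.mp h') hη
    obtain ⟨ξ, hξ⟩ := hsurj T hTinj ζ
    exact ⟨ξ, hξ⟩
  · let T : C →ₗ[ℝ] C :=
      { toFun := fun ξ => mul η ξ
        map_add' := by
          intro x y
          have := h4 1 η x y
          simpa using this
        map_smul' := by
          intro a x
          have := h4 a η x 0
          have hz : mul η (0 : C) = 0 := by
            have hn := h5 η 0
            rw [norm_zero, mul_zero] at hn
            exact norm_eq_zero.mp hn
          simpa [hz] using this }
    have hTinj : Function.Injective T := by
      intro x y hxy
      have : T (x - y) = 0 := by rw [map_sub, hxy, sub_self]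
      have hn : ‖η‖ * ‖x - y‖ = 0 := by
        have : ‖mul η (x - y)‖ = 0 := by
          simpa [T] using congrArg norm this
        rwa [h5] at this
      rcases mul_eq_zero.mp hn with h' | h'
      · exact absurd (norm_eq_zero.mp h') hη
      · exact sub_eq_zero.mp (norm_eq_zero.mp h')
    obtain ⟨ξ, hξ⟩ := hsurj T hTinj ζ
    exact ⟨ξ, hξ⟩
end

section
/- Let (C,V,J) be a J²C-module and v ∈ V nonzero. If z₁, z₂ are orthonormal elements of C' = (ℝ1)^⊥, then z₃ := z₁ ·_v z₂ lies in C' and is orthogonal to both z₁ and z₂; moreover z₁ ·_v z₃ = −z₂ and z₂ ·_v z₃ = z₁. Hence any division subalgebra of (C, ·_v) generated by two elements is associative. -/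
open scoped RealInnerProductSpace

set_option maxHeartbeats 2000000 in
theorem stmt4 {C V : Type*} [NormedAddCommGroup C] [InnerProductSpace ℝ C]
    [FiniteDimensional ℝ C] [NormedAddCommGroup V] [InnerProductSpace ℝ V]
    (e : C) (he : ‖e‖ = 1) (J : C →ₗ[ℝ] V →ₗ[ℝ] V)
    (hJ1 : ∀ v : V, J e v = v)
    (hJnorm : ∀ (ζ : C) (v : V), ‖J ζ v‖ = ‖ζ‖ * ‖v‖)
    (hJ2 : ∀ (v : V) (ζ η : C), ∃ ξ : C, J ζ (J η v) = J ξ v)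
    (v : V) (hv : v ≠ 0)
    (mul : C → C → C)
    (hmul : ∀ ζ η : C, J (mul ζ η) v = J ζ (J η v))
    (z₁ z₂ : C) (hz₁e : ⟪z₁, e⟫ = 0) (hz₂e : ⟪z₂, e⟫ = 0)
    (hz₁₂ : ⟪z₁, z₂⟫ = 0) (hn₁ : ‖z₁‖ = 1) (hn₂ : ‖z₂‖ = 1) :
    ⟪mul z₁ z₂, e⟫ = 0 ∧ ⟪mul z₁ z₂, z₁⟫ = 0 ∧ ⟪mul z₁ z₂, z₂⟫ = 0 ∧
    mul z₁ (mul z₁ z₂) = -z₂ ∧ mul z₂ (mul z₁ z₂) = z₁ ∧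
    (∀ a ∈ Submodule.span ℝ {e, z₁, z₂, mul z₁ z₂},
      ∀ b ∈ Submodule.span ℝ {e, z₁, z₂, mul z₁ z₂},
      ∀ c ∈ Submodule.span ℝ {e, z₁, z₂, mul z₁ z₂},
        mul (mul a b) c = mul a (mul b c)) := by
  have hv' : ‖v‖ ≠ 0 := norm_ne_zero_iff.mpr hv
  -- injectivity of ζ ↦ J ζ v
  have hinj : ∀ ζ ξ : C, J ζ v = J ξ v → ζ = ξ := by
    intro ζ ξ h
    have h0 : J (ζ - ξ) v = 0 := by
      rw [map_sub, LinearMap.sub_apply, h, sub_self]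
    have h1 := hJnorm (ζ - ξ) v
    rw [h0, norm_zero] at h1
    rcases mul_eq_zero.mp h1.symm with h2 | h2
    · rwa [norm_eq_zero, sub_eq_zero] at h2
    · exact absurd h2 hv'
  -- bilinearity of mul
  have hadd_l : ∀ a a' b : C, mul (a + a') b = mul a b + mul a' b := by
    intro a a' b
    apply hinj
    simp [hmul, map_add]
  have hadd_r : ∀ a b b' : C, mul a (b + b') = mul a b + mul a b' := by
    intro a b b'
    apply hinj
    simp [hmul, map_add]
  have hsmul_l : ∀ (r : ℝ) (a b : C), mul (r • a) b = r • mul a b := by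
    intro r a b
    apply hinj
    simp [hmul, map_smul]
  have hsmul_r : ∀ (r : ℝ) (a b : C), mul a (r • b) = r • mul a b := by
    intro r a b
    apply hinj
    simp [hmul, map_smul]
  have hneg_l : ∀ a b : C, mul (-a) b = -mul a b := by
    intro a b
    apply hinj
    simp [hmul, map_neg]
  have hneg_r : ∀ a b : C, mul a (-b) = -mul a b := by
    intro a b
    apply hinj
    simp [hmul, map_neg]
  have hzero_l : ∀ b : C, mul 0 b = 0 := by
    intro b; apply hinj; simp [hmul, map_zero]
  have hzero_r : ∀ a : C, mul a 0 = 0 := by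
    intro a; apply hinj; simp [hmul, map_zero]
  have he_l : ∀ b : C, mul e b = b := by
    intro b; apply hinj; rw [hmul, hJ1]
  have he_r : ∀ a : C, mul a e = a := by
    intro a; apply hinj; rw [hmul, hJ1]
  -- composition law
  have hN : ∀ a b : C, ‖mul a b‖ = ‖a‖ * ‖b‖ := by
    intro a b
    have h1 : ‖mul a b‖ * ‖v‖ = ‖a‖ * ‖b‖ * ‖v‖ := by
      rw [← hJnorm (mul a b) v, hmul, hJnorm, hJnorm, mul_assoc]
    exact mul_right_cancel₀ hv' h1
  -- polarization identities
  have hI1 : ∀ a b c : C, ⟪mul a b, mul a c⟫ = ‖a‖ ^ 2 * ⟪b, c⟫ := by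
    intro a b c
    have h1 : ‖mul a b + mul a c‖ ^ 2 = (‖a‖ * ‖b + c‖) ^ 2 := by
      rw [← hadd_r, hN]
    have h2 := norm_add_sq_real (mul a b) (mul a c)
    have h3 := norm_add_sq_real b c
    have hb := hN a b
    have hc := hN a c
    have h4 : (‖a‖ * ‖b‖) ^ 2 + 2 * ⟪mul a b, mul a c⟫ + (‖a‖ * ‖c‖) ^ 2
        = ‖a‖ ^ 2 * (‖b‖ ^ 2 + 2 * ⟪b, c⟫ + ‖c‖ ^ 2) := by
      rw [← hb, ← hc, ← h3, ← h2, h1, mul_pow]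
    nlinarith [h4]
  have hI2 : ∀ a b c : C, ⟪mul a c, mul b c⟫ = ⟪a, b⟫ * ‖c‖ ^ 2 := by
    intro a b c
    have h1 : ‖mul a c + mul b c‖ ^ 2 = (‖a + b‖ * ‖c‖) ^ 2 := by
      rw [← hadd_l, hN]
    have h2 := norm_add_sq_real (mul a c) (mul b c)
    have h3 := norm_add_sq_real a b
    have hb := hN a c
    have hc := hN b c
    have h4 : (‖a‖ * ‖c‖) ^ 2 + 2 * ⟪mul a c, mul b c⟫ + (‖b‖ * ‖c‖) ^ 2
        = (‖a‖ ^ 2 + 2 * ⟪a, b⟫ + ‖b‖ ^ 2) * ‖c‖ ^ 2 := by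
      rw [← hb, ← hc, ← h3, ← h2, h1, mul_pow]
    nlinarith [h4]
  have hI3 : ∀ a a' b c : C,
      ⟪mul a b, mul a' c⟫ + ⟪mul a' b, mul a c⟫ = 2 * ⟪a, a'⟫ * ⟪b, c⟫ := by
    intro a a' b c
    have h1 := hI1 (a + a') b c
    rw [hadd_l, hadd_l, inner_add_left, inner_add_right, inner_add_right,
      norm_add_sq_real] at h1
    have h2 := hI1 a b c
    have h3 := hI1 a' b c
    nlinarith [h1, h2, h3]
  have hI3' : ∀ a b c c' : C,
      ⟪mul a c, mul b c'⟫ + ⟪mul a c', mul b c⟫ = 2 * ⟪a, b⟫ * ⟪c, c'⟫ := by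
    intro a b c c'
    have h1 := hI2 a b (c + c')
    rw [hadd_r, hadd_r, inner_add_left, inner_add_right, inner_add_right,
      norm_add_sq_real] at h1
    have h2 := hI2 a b c
    have h3 := hI2 a b c'
    nlinarith [h1, h2, h3]
  -- adjoint identities for elements orthogonal to e
  have hadj_l : ∀ a x y : C, ⟪a, e⟫ = 0 → ⟪mul a x, y⟫ = -⟪x, mul a y⟫ := by
    intro a x y ha
    have h1 := hI3 a e x y
    rw [he_l, he_l, ha] at h1
    simp at h1
    linarith [h1]
  have hadj_r : ∀ b x y : C, ⟪b, e⟫ = 0 → ⟪mul x b, y⟫ = -⟪x, mul y b⟫ := by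
    intro b x y hb
    have h1 := hI3' x y b e
    rw [he_r, he_r, hb] at h1
    simp at h1
    linarith [h1]
  -- anticommutativity
  have hanti : ∀ a b : C, ⟪a, e⟫ = 0 → ⟪b, e⟫ = 0 → ⟪a, b⟫ = 0 →
      mul a b = -mul b a := by
    intro a b ha hb hab
    apply ext_inner_right ℝ
    intro c
    have h1 := hadj_l a b c ha
    have h2 := hadj_l b a c hb
    have h3 := hI3 a b e c
    rw [he_r, he_r, hab] at h3
    simp at h3
    rw [inner_neg_left]
    linarith [h1, h2, h3]
  -- squares of elements orthogonal to e
  have hsq : ∀ a : C, ⟪a, e⟫ = 0 → ‖a‖ = 1 → mul a a = -e := by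
    intro a ha hna
    apply ext_inner_right ℝ
    intro c
    have h1 : ⟪mul a a, c⟫ = -⟪a, mul a c⟫ := hadj_l a a c ha
    have h2 : ⟪mul a e, mul a c⟫ = ‖a‖ ^ 2 * ⟪e, c⟫ := hI1 a e c
    rw [he_r, hna] at h2
    rw [h1, h2, inner_neg_left]
    ring
  -- the three orthogonality claims
  have hoe : ⟪mul z₁ z₂, e⟫ = 0 := by
    have h1 := hadj_l z₁ z₂ e hz₁e
    rw [he_r] at h1
    rw [h1, real_inner_comm]
    simp [hz₁₂]
  have ho1 : ⟪mul z₁ z₂, z₁⟫ = 0 := by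
    have h1 := hI1 z₁ z₂ e
    rw [he_r, hz₂e] at h1
    simpa using h1
  have ho2 : ⟪mul z₁ z₂, z₂⟫ = 0 := by
    have h1 := hI2 z₁ e z₂
    rw [he_l, hz₁e] at h1
    simpa using h1
  -- norm of z₃
  have hn₃ : ‖mul z₁ z₂‖ = 1 := by rw [hN, hn₁, hn₂, one_mul]
  -- multiplication table
  have h11 : mul z₁ z₁ = -e := hsq z₁ hz₁e hn₁
  have h22 : mul z₂ z₂ = -e := hsq z₂ hz₂e hn₂
  have h33 : mul (mul z₁ z₂) (mul z₁ z₂) = -e := hsq _ hoe hn₃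
  have h21 : mul z₂ z₁ = -mul z₁ z₂ := by
    rw [hanti z₂ z₁ hz₂e hz₁e (by rw [real_inner_comm]; exact hz₁₂)]
  have h13 : mul z₁ (mul z₁ z₂) = -z₂ := by
    apply ext_inner_right ℝ
    intro c
    have h1 := hadj_l z₁ (mul z₁ z₂) c hz₁e
    have h2 := hI1 z₁ z₂ c
    rw [h1, h2, hn₁, inner_neg_left]
    ring
  have h32 : mul (mul z₁ z₂) z₂ = -z₁ := by
    apply ext_inner_right ℝ
    intro c
    have h1 := hadj_r z₂ (mul z₁ z₂) c hz₂e
    have h2 := hI2 z₁ c z₂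
    rw [h1, h2, hn₂, inner_neg_left]
    ring
  have h23 : mul z₂ (mul z₁ z₂) = z₁ := by
    rw [hanti z₂ (mul z₁ z₂) hz₂e hoe (by rw [real_inner_comm]; exact ho2), h32,
      neg_neg]
  have h31 : mul (mul z₁ z₂) z₁ = z₂ := by
    rw [hanti (mul z₁ z₂) z₁ hoe hz₁e ho1, h13, neg_neg]
  refine ⟨hoe, ho1, ho2, h13, h23, ?_⟩
  -- associativity on the span
  set S : Set C := {e, z₁, z₂, mul z₁ z₂} with hS
  have hbase : ∀ x ∈ S, ∀ y ∈ S, ∀ z ∈ S, mul (mul x y) z = mul x (mul y z) := by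
    intro x hx y hy z hz
    simp only [hS, Set.mem_insert_iff, Set.mem_singleton_iff] at hx hy hz
    rcases hx with rfl | rfl | rfl | rfl <;>
      rcases hy with rfl | rfl | rfl | rfl <;>
        rcases hz with rfl | rfl | rfl | rfl <;>
          simp only [he_l, he_r, h11, h22, h33, h21, h13, h32, h23, h31,
            hneg_l, hneg_r, neg_neg]
  have hstep3 : ∀ x ∈ S, ∀ y ∈ S, ∀ c ∈ Submodule.span ℝ S,
      mul (mul x y) c = mul x (mul y c) := by
    intro x hx y hy c hc
    induction hc using Submodule.span_induction with
    | mem z hz => exact hbase x hx y hy z hz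
    | zero => simp [hzero_l, hzero_r]
    | add a b _ _ ha hb => rw [hadd_r, hadd_r, hadd_r, ha, hb]
    | smul r a _ ha => rw [hsmul_r, hsmul_r, hsmul_r, ha]
  have hstep2 : ∀ x ∈ S, ∀ b ∈ Submodule.span ℝ S, ∀ c ∈ Submodule.span ℝ S,
      mul (mul x b) c = mul x (mul b c) := by
    intro x hx b hb
    induction hb using Submodule.span_induction with
    | mem y hy => exact hstep3 x hx y hy
    | zero => intro c _; simp [hzero_l, hzero_r]
    | add a b _ _ ha hb =>
      intro c hc
      rw [hadd_r, hadd_l, hadd_l, hadd_r, ha c hc, hb c hc]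
    | smul r a _ ha =>
      intro c hc
      rw [hsmul_r, hsmul_l, hsmul_l, hsmul_r, ha c hc]
  intro a ha b hb c hc
  induction ha using Submodule.span_induction with
  | mem x hx => exact hstep2 x hx b hb c hc
  | zero => simp [hzero_l, hzero_r]
  | add x y _ _ hx hy => rw [hadd_l, hadd_l, hadd_l, hx, hy]
  | smul r x _ hx => rw [hsmul_l, hsmul_l, hsmul_l, hx]
end

section
/- Let (C,V,J) be a J²C-module that is not irreducible (i.e., there exists v ≠ 0 with Cv ≠ V). Then the multiplication ·_v on C defined by (ζ ·_v η)v = ζ(ηv) is independent of the choice of nonzero v ∈ V. -/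
open scoped RealInnerProductSpace

theorem stmt5 {C V : Type*} [NormedAddCommGroup C] [InnerProductSpace ℝ C]
    [FiniteDimensional ℝ C] [NormedAddCommGroup V] [InnerProductSpace ℝ V]
    (e : C) (he : ‖e‖ = 1) (J : C →ₗ[ℝ] V →ₗ[ℝ] V)
    (hJ1 : ∀ v : V, J e v = v)
    (hJnorm : ∀ (ζ : C) (v : V), ‖J ζ v‖ = ‖ζ‖ * ‖v‖)
    (hJ2 : ∀ (v : V) (ζ η : C), ∃ ξ : C, J ζ (J η v) = J ξ v)
    (hnotirr : ∃ v : V, v ≠ 0 ∧ Set.range (fun ζ : C => J ζ v) ≠ Set.univ) :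
    ∀ (u v : V), u ≠ 0 → v ≠ 0 → ∀ (ζ η ξ ξ' : C),
      J ξ u = J ζ (J η u) → J ξ' v = J ζ (J η v) → ξ = ξ' := by
  -- uniqueness of coefficients
  have huniq : ∀ (α β : C) (x : V), x ≠ 0 → J α x = J β x → α = β := by
    intro α β x hx h
    have h0 : J (α - β) x = 0 := by
      rw [map_sub, LinearMap.sub_apply, h, sub_self]
    have hn := hJnorm (α - β) x
    rw [h0, norm_zero] at hn
    rcases mul_eq_zero.mp hn.symm with h1 | h1
    · exact sub_eq_zero.mp (norm_eq_zero.mp h1)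
    · exact absurd (norm_eq_zero.mp h1) hx
  -- (B) : each J α is conformal
  have hB : ∀ (α : C) (a b : V), ⟪J α a, J α b⟫ = ‖α‖ ^ 2 * ⟪a, b⟫ := by
    intro α a b
    have h1 : ‖J α a + J α b‖ ^ 2 = ‖α‖ ^ 2 * ‖a + b‖ ^ 2 := by
      rw [← map_add, hJnorm]; ring
    have h2 : ‖J α a‖ ^ 2 = ‖α‖ ^ 2 * ‖a‖ ^ 2 := by rw [hJnorm]; ring
    have h3 : ‖J α b‖ ^ 2 = ‖α‖ ^ 2 * ‖b‖ ^ 2 := by rw [hJnorm]; ring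
    rw [norm_add_sq_real, norm_add_sq_real] at h1
    nlinarith [h1, h2, h3]
  -- (A) : skew-adjointness modulo the e-component
  have hA : ∀ (α : C) (a b : V), ⟪J α a, b⟫ + ⟪a, J α b⟫ = 2 * ⟪α, e⟫ * ⟪a, b⟫ := by
    intro α a b
    have h1 := hB (α + e) a b
    have hae : ∀ x : V, J (α + e) x = J α x + x := by
      intro x; rw [map_add, LinearMap.add_apply, hJ1]
    rw [hae, hae, inner_add_left, inner_add_right, inner_add_right] at h1
    have h2 := hB α a b
    have h3 : ‖α + e‖ ^ 2 = ‖α‖ ^ 2 + 2 * ⟪α, e⟫ + 1 := by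
      rw [norm_add_sq_real, he]; ring
    rw [h3] at h1
    nlinarith [h1, h2]
  -- core lemma: orthogonal ranges give equal multiplications
  have L1 : ∀ (x y : V), x ≠ 0 → y ≠ 0 → (∀ (α β : C), ⟪J α x, J β y⟫ = 0) →
      ∀ (ζ η ξ ξ' : C), J ξ x = J ζ (J η x) → J ξ' y = J ζ (J η y) → ξ = ξ' := by
    intro x y hx hy hperp ζ η ξ ξ' hxe hye
    have hxy0 : ⟪x, y⟫ = 0 := by simpa [hJ1] using hperp e e
    have hs : x + y ≠ 0 := by
      intro h
      have : y = -x := by linear_combination (norm := abel1) h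
      rw [this, inner_neg_right, real_inner_self_eq_norm_sq] at hxy0
      have : ‖x‖ = 0 := by nlinarith [hxy0]
      exact hx (norm_eq_zero.mp this)
    obtain ⟨ξ'', h''⟩ := hJ2 (x + y) ζ η
    have e1 : J ζ (J η x) + J ζ (J η y) = J ξ'' x + J ξ'' y := by
      simpa [map_add] using h''
    have hsum : J (ξ'' - ξ) x + J (ξ'' - ξ') y = 0 := by
      have : J (ξ'' - ξ) x + J (ξ'' - ξ') y
          = (J ξ'' x + J ξ'' y) - (J ξ x + J ξ' y) := by
        simp [map_sub, LinearMap.sub_apply]; abel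
      rw [this, hxe, hye, ← e1, sub_self]
    have hx0 : J (ξ'' - ξ) x = 0 := by
      have h0 : ⟪J (ξ'' - ξ) x + J (ξ'' - ξ') y, J (ξ'' - ξ) x⟫ = 0 := by
        rw [hsum, inner_zero_left]
      rw [inner_add_left] at h0
      have h1 : ⟪J (ξ'' - ξ') y, J (ξ'' - ξ) x⟫ = 0 := by
        rw [real_inner_comm]; exact hperp _ _
      rw [h1, add_zero, inner_self_eq_zero] at h0
      exact h0
    have hy0 : J (ξ'' - ξ') y = 0 := by
      have := hsum; rw [hx0, zero_add] at this; exact this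
    have hx1 : ξ'' = ξ := by
      have := huniq (ξ'' - ξ) 0 x hx (by rw [hx0]; simp)
      exact sub_eq_zero.mp (by simpa using this)
    have hy1 : ξ'' = ξ' := by
      have := huniq (ξ'' - ξ') 0 y hy (by rw [hy0]; simp)
      exact sub_eq_zero.mp (by simpa using this)
    rw [← hx1, hy1]
  -- the distinguished non-cyclic vector
  obtain ⟨w, hw, hrange⟩ := hnotirr
  set W : Submodule ℝ V := LinearMap.range (J.flip w) with hWdef
  have hmemW : ∀ x : V, x ∈ W ↔ ∃ α : C, J α w = x := by
    intro x
    constructor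
    · rintro ⟨α, rfl⟩; exact ⟨α, rfl⟩
    · rintro ⟨α, rfl⟩; exact ⟨α, rfl⟩
  have hWinv : ∀ (α : C) (x : V), x ∈ W → J α x ∈ W := by
    intro α x hx
    obtain ⟨β, rfl⟩ := (hmemW x).mp hx
    obtain ⟨γ, hγ⟩ := hJ2 w α β
    exact (hmemW _).mpr ⟨γ, hγ.symm⟩
  have hWperp_inv : ∀ (α : C) (x : V), x ∈ Wᗮ → J α x ∈ Wᗮ := by
    intro α x hx
    rw [Submodule.mem_orthogonal]
    intro u hu
    have h2 : ⟪x, u⟫ = 0 := by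
      rw [real_inner_comm]
      exact (Submodule.mem_orthogonal W x).mp hx u hu
    have h3 : ⟪x, J α u⟫ = 0 := by
      rw [real_inner_comm]
      exact (Submodule.mem_orthogonal W x).mp hx _ (hWinv α u hu)
    have h1 := hA α x u
    rw [h2, h3, mul_zero] at h1
    rw [real_inner_comm]
    linarith [h1]
  have hWne : W ≠ ⊤ := by
    intro h
    apply hrange
    have : (W : Set V) = Set.range (fun ζ : C => J ζ w) := by
      rw [hWdef]; ext x; simp [LinearMap.flip_apply]
    rw [h] at this
    rw [← this]; rfl
  haveI : FiniteDimensional ℝ W := by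
    rw [hWdef]; infer_instance
  haveI : CompleteSpace W := FiniteDimensional.complete ℝ W
  have hperp_ne : Wᗮ ≠ ⊥ := by
    intro h
    exact hWne (Submodule.orthogonal_eq_bot_iff.mp h)
  obtain ⟨z, hzW, hz0⟩ := (Submodule.ne_bot_iff _).mp hperp_ne
  have hwW : w ∈ W := (hmemW w).mpr ⟨e, hJ1 w⟩
  -- orthogonality facts
  have hWWp : ∀ (p q : V), p ∈ W → q ∈ Wᗮ → ∀ (α β : C), ⟪J α p, J β q⟫ = 0 := by
    intro p q hp hq α β
    exact ((Submodule.mem_orthogonal W _).mp (hWperp_inv β q hq) _ (hWinv α p hp))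
  -- main claim: everything agrees with w
  have claim : ∀ (x : V), x ≠ 0 → ∀ (ζ η ξ₁ ξw : C),
      J ξ₁ x = J ζ (J η x) → J ξw w = J ζ (J η w) → ξ₁ = ξw := by
    intro x hx ζ η ξ₁ ξw hx1 hwe
    obtain ⟨a, ha, b, hb, hab⟩ := W.exists_add_mem_mem_orthogonal x
    -- split the defining relation along the decomposition
    have hsplit : (J ξ₁ a - J ζ (J η a)) + (J ξ₁ b - J ζ (J η b)) = 0 := by
      have : J ξ₁ a + J ξ₁ b = J ζ (J η a) + J ζ (J η b) := by
        have := hx1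
        rw [hab, map_add, map_add, map_add] at this
        exact this
      linear_combination (norm := abel1) this
    have hp : (J ξ₁ a - J ζ (J η a)) ∈ W :=
      W.sub_mem (hWinv _ _ ha) (hWinv _ _ (hWinv _ _ ha))
    have hq : (J ξ₁ b - J ζ (J η b)) ∈ Wᗮ :=
      Wᗮ.sub_mem (hWperp_inv _ _ hb) (hWperp_inv _ _ (hWperp_inv _ _ hb))
    have hp0 : J ξ₁ a = J ζ (J η a) := by
      have h0 : ⟪(J ξ₁ a - J ζ (J η a)) + (J ξ₁ b - J ζ (J η b)),
          J ξ₁ a - J ζ (J η a)⟫ = 0 := by rw [hsplit, inner_zero_left]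
      rw [inner_add_left] at h0
      have h1 : ⟪J ξ₁ b - J ζ (J η b), J ξ₁ a - J ζ (J η a)⟫ = 0 := by
        rw [real_inner_comm]
        exact (Submodule.mem_orthogonal W _).mp hq _ hp
      rw [h1, add_zero, inner_self_eq_zero, sub_eq_zero] at h0
      exact h0
    have hq0 : J ξ₁ b = J ζ (J η b) := by
      have := hsplit
      rw [sub_eq_zero.mpr hp0, zero_add, sub_eq_zero] at this
      exact this
    by_cases hbz : b = 0
    · -- x = a ∈ W, go through z
      have hax : a = x := by rw [hab, hbz, add_zero]
      obtain ⟨ξz, hξz⟩ := hJ2 z ζ η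
      have h1 : ξ₁ = ξz := by
        refine L1 x z hx hz0 ?_ ζ η ξ₁ ξz (by rw [← hax] at hx1 ⊢; exact hp0) hξz.symm
        intro α β
        exact hWWp x z (hax ▸ ha) hzW α β
      have h2 : ξz = ξw := by
        refine L1 z w hz0 hw ?_ ζ η ξz ξw hξz.symm hwe
        intro α β
        rw [real_inner_comm]
        exact hWWp w z hwW hzW β α
      rw [h1, h2]
    · -- b ≠ 0, b ∈ Wᗮ, compare directly with w
      refine L1 b w hbz hw ?_ ζ η ξ₁ ξw hq0 hwe
      intro α β
      rw [real_inner_comm]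
      exact hWWp w b hwW hb β α
  intro u v hu hv ζ η ξ ξ' hξu hξv
  obtain ⟨ξw, hξw⟩ := hJ2 w ζ η
  have h1 := claim u hu ζ η ξ ξw hξu hξw.symm
  have h2 := claim v hv ζ η ξ' ξw hξv hξw.symm
  rw [h1, h2]
end

section
/- Let (C,V,J) be a J²C-module with V ≠ 0. The product ·_v is independent of v if and only if (C, ·_v) is associative for one (and hence every) nonzero v ∈ V. In particular, if dim C ≤ 4 then ·_v is independent of v. -/
open scoped RealInnerProductSpace

theorem comp_assoc_of_finrank_le_four {C : Type*} [NormedAddCommGroup C]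
    [InnerProductSpace ℝ C] [FiniteDimensional ℝ C]
    (hdim : Module.finrank ℝ C ≤ 4) (e : C) (he : e ≠ 0) (m : C →ₗ[ℝ] C →ₗ[ℝ] C)
    (hul : ∀ a, m e a = a) (hur : ∀ a, m a e = a)
    (hN : ∀ a b y z : C, ⟪m a y, m b z⟫ + ⟪m b y, m a z⟫ = 2 * ⟪a, b⟫ * ⟪y, z⟫)
    (hN' : ∀ a b y z : C, ⟪m a y, m b z⟫ + ⟪m a z, m b y⟫ = 2 * ⟪a, b⟫ * ⟪y, z⟫) :
    ∀ x y z : C, m (m x y) z = m x (m y z) := by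
  have h5a : ∀ a y z : C, ⟪m a y, m a z⟫ = ⟪a, a⟫ * ⟪y, z⟫ := by
    intro a y z; have := hN a a y z; linarith
  have h5b : ∀ a b y : C, ⟪m a y, m b y⟫ = ⟪a, b⟫ * ⟪y, y⟫ := by
    intro a b y; have := hN' a b y y; linarith
  have hLs : ∀ x y z : C, ⟪m x y, z⟫ = 2 * ⟪x, e⟫ * ⟪y, z⟫ - ⟪y, m x z⟫ := by
    intro x y z; have h := hN x e y z; rw [hul, hul] at h; linear_combination h
  have hRs : ∀ x y z : C, ⟪m x y, z⟫ = 2 * ⟪y, e⟫ * ⟪x, z⟫ - ⟪x, m z y⟫ := by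
    intro x y z
    have h := hN' x z y e; rw [hur, hur] at h; linear_combination h
  have hsq : ∀ x : C, m x x = (2 * ⟪x, e⟫) • x - ⟪x, x⟫ • e := by
    intro x
    apply ext_inner_right ℝ; intro w
    have h1 := hRs x x w
    have h2 : ⟪x, m w x⟫ = ⟪e, w⟫ * ⟪x, x⟫ := by
      have h := h5b e w x; rw [hul] at h; linear_combination h
    rw [inner_sub_left, real_inner_smul_left, real_inner_smul_left]
    linear_combination h1 - h2
  have hlalt : ∀ x y : C, m x (m x y) = (2 * ⟪x, e⟫) • m x y - ⟪x, x⟫ • y := by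
    intro x y
    apply ext_inner_right ℝ; intro w
    have h1 := hLs x (m x y) w
    have h2 : ⟪m x y, m x w⟫ = ⟪x, x⟫ * ⟪y, w⟫ := h5a x y w
    rw [inner_sub_left, real_inner_smul_left, real_inner_smul_left]
    linear_combination h1 - h2
  have hralt : ∀ x y : C, m (m y x) x = (2 * ⟪x, e⟫) • m y x - ⟪x, x⟫ • y := by
    intro x y
    apply ext_inner_right ℝ; intro w
    have h1 := hRs (m y x) x w
    have h2 : ⟪m y x, m w x⟫ = ⟪y, w⟫ * ⟪x, x⟫ := h5b y w x
    rw [inner_sub_left, real_inner_smul_left, real_inner_smul_left]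
    linear_combination h1 - h2
  -- the associator
  set F : C → C → C → C := fun x y z => m (m x y) z - m x (m y z) with hF
  have hFxx : ∀ x z : C, F x x z = 0 := by
    intro x z
    have : m (m x x) z = (2 * ⟪x, e⟫) • m x z - ⟪x, x⟫ • z := by
      rw [hsq x]; simp [map_sub, map_smul, LinearMap.sub_apply, LinearMap.smul_apply, hul]
    simp only [hF, this, hlalt x z]
    abel
  have hFyy : ∀ x y : C, F x y y = 0 := by
    intro x y
    have : m x (m y y) = (2 * ⟪y, e⟫) • m x y - ⟪y, y⟫ • x := by
      rw [hsq y]; simp [map_sub, map_smul, hur]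
    simp only [hF, this, hralt y x]
    abel
  have hfzz : ∀ x y z : C, ⟪F x y z, z⟫ = 0 := by
    intro x y z
    have haz : ∀ a : C, ⟪m a z, z⟫ = ⟪a, e⟫ * ⟪z, z⟫ := by
      intro a
      have h := hN a e z z; rw [hul] at h
      have hc : ⟪z, m a z⟫ = ⟪m a z, z⟫ := real_inner_comm _ _
      linear_combination h / 2 - hc / 2
    have h1 : ⟪m (m x y) z, z⟫ = ⟪m x y, e⟫ * ⟪z, z⟫ := haz (m x y)
    have h2 : ⟪m x y, e⟫ = 2 * ⟪y, e⟫ * ⟪x, e⟫ - ⟪x, y⟫ := by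
      have h := hRs x y e; rw [hul] at h; linear_combination h
    have h3 := hLs x (m y z) z
    have h4 : ⟪m y z, z⟫ = ⟪y, e⟫ * ⟪z, z⟫ := haz y
    have h5 : ⟪m y z, m x z⟫ = ⟪y, x⟫ * ⟪z, z⟫ := h5b y x z
    have hc : ⟪y, x⟫ = ⟪x, y⟫ := real_inner_comm _ _
    simp only [hF, inner_sub_left]
    linear_combination h1 + ⟪z, z⟫ * h2 - h3 - 2 * ⟪x, e⟫ * h4 + h5 + ⟪z, z⟫ * hc
  -- multilinearity of F
  have Fadd1 : ∀ x x' y z : C, F (x + x') y z = F x y z + F x' y z := by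
    intro a b y z; simp only [hF, map_add, LinearMap.add_apply]; abel
  have Fsmul1 : ∀ (r : ℝ) (x y z : C), F (r • x) y z = r • F x y z := by
    intro r a y z; simp only [hF, map_smul, LinearMap.smul_apply, smul_sub]
  have Fadd2 : ∀ x y y' z : C, F x (y + y') z = F x y z + F x y' z := by
    intro a b y z; simp only [hF, map_add, LinearMap.add_apply]; abel
  have Fsmul2 : ∀ (r : ℝ) (x y z : C), F x (r • y) z = r • F x y z := by
    intro r a y z; simp only [hF, map_smul, LinearMap.smul_apply, smul_sub]
  have Fadd3 : ∀ x y z z' : C, F x y (z + z') = F x y z + F x y z' := by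
    intro a y z z'; simp only [hF, map_add]; abel
  have Fsmul3 : ∀ (r : ℝ) (x y z : C), F x y (r • z) = r • F x y z := by
    intro r a y z; simp only [hF, map_smul, smul_sub]
  -- skew symmetries
  have s12 : ∀ x y z : C, F y x z = - F x y z := by
    intro x y z
    have h := hFxx (x + y) z
    rw [Fadd1, Fadd2, Fadd2, hFxx, hFxx] at h
    have h' : F x y z + F y x z = 0 := by
      have := h; rw [zero_add, add_zero] at this; exact this
    exact eq_neg_of_add_eq_zero_right h'
  have s23 : ∀ x y z : C, F x z y = - F x y z := by
    intro x y z
    have h := hFyy x (y + z)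
    rw [Fadd2, Fadd3, Fadd3, hFyy, hFyy] at h
    have h' : F x y z + F x z y = 0 := by
      have := h; rw [zero_add, add_zero] at this; exact this
    exact eq_neg_of_add_eq_zero_right h'
  have s34 : ∀ x y z w : C, ⟪F x y z, w⟫ = - ⟪F x y w, z⟫ := by
    intro x y z w
    have h := hfzz x y (z + w)
    rw [Fadd3, inner_add_left, inner_add_right, inner_add_right, hfzz, hfzz] at h
    have h' : ⟪F x y z, w⟫ + ⟪F x y w, z⟫ = 0 := by linarith
    linarith
  -- vanishing lemmas
  have hFe1 : ∀ y z : C, F e y z = 0 := by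
    intro y z; simp only [hF, hul]; abel
  have hFe2 : ∀ x z : C, F x e z = 0 := by
    intro x z; rw [s12, hFe1, neg_zero]
  have hFe3 : ∀ x y : C, F x y e = 0 := by
    intro x y; rw [s23, hFe2, neg_zero]
  have he4 : ∀ x y z : C, ⟪F x y z, e⟫ = 0 := by
    intro x y z; rw [s34, hFe3, inner_zero_left, neg_zero]
  have p13 : ∀ a b : C, F a b a = 0 := by
    intro a b; rw [s23, hFxx, neg_zero]
  have p14 : ∀ a b c : C, ⟪F a b c, a⟫ = 0 := by
    intro a b c; rw [s34, p13, inner_zero_left, neg_zero]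
  have p24 : ∀ a b c : C, ⟪F a b c, b⟫ = 0 := by
    intro a b c; rw [s34, hFyy, inner_zero_left, neg_zero]
  -- main vanishing, via dimension
  have hf0 : ∀ x y z w : C, ⟪F x y z, w⟫ = 0 := by
    intro x y z w
    have hnli : ¬ LinearIndependent ℝ ![e, x, y, z, w] := by
      intro hli
      have := hli.fintype_card_le_finrank
      simp only [Fintype.card_fin] at this
      omega
    obtain ⟨g, hg, i, hi⟩ := Fintype.not_linearIndependent_iff.mp hnli
    have hcombo : g 0 • e + g 1 • x + g 2 • y + g 3 • z + g 4 • w = 0 := by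
      have := hg
      rw [Fin.sum_univ_five] at this
      simpa using this
    by_cases h1 : g 1 ≠ 0
    · have h0 : ⟪F (g 0 • e + g 1 • x + g 2 • y + g 3 • z + g 4 • w) y z, w⟫ = 0 := by
        rw [hcombo]; simp [hF]
      simp only [Fadd1, Fsmul1, inner_add_left, real_inner_smul_left, hFe1, hFxx, p13,
        inner_zero_left, mul_zero, zero_add, add_zero, p14] at h0
      exact (mul_eq_zero.mp h0).resolve_left h1
    push_neg at h1
    by_cases h2 : g 2 ≠ 0
    · have h0 : ⟪F x (g 0 • e + g 1 • x + g 2 • y + g 3 • z + g 4 • w) z, w⟫ = 0 := by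
        rw [hcombo]; simp [hF]
      simp only [Fadd2, Fsmul2, inner_add_left, real_inner_smul_left, hFe2, hFxx, hFyy,
        inner_zero_left, mul_zero, zero_add, add_zero, p24] at h0
      exact (mul_eq_zero.mp h0).resolve_left h2
    push_neg at h2
    by_cases h3 : g 3 ≠ 0
    · have h0 : ⟪F x y (g 0 • e + g 1 • x + g 2 • y + g 3 • z + g 4 • w), w⟫ = 0 := by
        rw [hcombo]; simp [hF]
      simp only [Fadd3, Fsmul3, inner_add_left, real_inner_smul_left, hFe3, p13, hFyy,
        inner_zero_left, mul_zero, zero_add, add_zero, hfzz] at h0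
      exact (mul_eq_zero.mp h0).resolve_left h3
    push_neg at h3
    by_cases h4 : g 4 ≠ 0
    · have h0 : ⟪F x y z, g 0 • e + g 1 • x + g 2 • y + g 3 • z + g 4 • w⟫ = 0 := by
        rw [hcombo]; simp
      simp only [inner_add_right, real_inner_smul_right, he4, p14, p24, hfzz,
        mul_zero, zero_add, add_zero] at h0
      exact (mul_eq_zero.mp h0).resolve_left h4
    push_neg at h4
    exfalso
    have hg0 : g 0 ≠ 0 := by
      fin_cases i
      · exact hi
      all_goals first
        | exact absurd h1 hi
        | exact absurd h2 hi
        | exact absurd h3 hi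
        | exact absurd h4 hi
    rw [h1, h2, h3, h4] at hcombo
    simp only [zero_smul, add_zero] at hcombo
    rcases smul_eq_zero.mp hcombo with h | h
    · exact hg0 h
    · exact he h
  intro x y z
  have hz : F x y z = 0 := by
    apply ext_inner_right ℝ; intro w
    rw [hf0, inner_zero_left]
  have : m (m x y) z - m x (m y z) = 0 := hz
  exact sub_eq_zero.mp this

theorem stmt6 {C V : Type*} [NormedAddCommGroup C] [InnerProductSpace ℝ C]
    [FiniteDimensional ℝ C] [NormedAddCommGroup V] [InnerProductSpace ℝ V]
    (e : C) (he : ‖e‖ = 1) (J : C →ₗ[ℝ] V →ₗ[ℝ] V)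
    (hJ1 : ∀ v : V, J e v = v)
    (hJnorm : ∀ (ζ : C) (v : V), ‖J ζ v‖ = ‖ζ‖ * ‖v‖)
    (hJ2 : ∀ (v : V) (ζ η : C), ∃ ξ : C, J ζ (J η v) = J ξ v)
    (hVnt : ∃ v : V, v ≠ 0)
    (mul : V → C → C → C)
    (hmul : ∀ v : V, v ≠ 0 → ∀ ζ η : C, J (mul v ζ η) v = J ζ (J η v)) :
    ((∀ u v : V, u ≠ 0 → v ≠ 0 → mul u = mul v) ↔
      (∃ v : V, v ≠ 0 ∧ ∀ ζ η ξ : C,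
        mul v (mul v ζ η) ξ = mul v ζ (mul v η ξ))) ∧
    (Module.finrank ℝ C ≤ 4 → ∀ u v : V, u ≠ 0 → v ≠ 0 → mul u = mul v) := by
  have he0 : e ≠ 0 := by
    intro h; rw [h, norm_zero] at he; norm_num at he
  -- injectivity of a ↦ J a v for v ≠ 0
  have hJinj : ∀ v : V, v ≠ 0 → ∀ a b : C, J a v = J b v → a = b := by
    intro v hv a b h
    have h0 : ‖J (a - b) v‖ = ‖a - b‖ * ‖v‖ := hJnorm _ _
    rw [map_sub, LinearMap.sub_apply, h, sub_self, norm_zero] at h0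
    have h1 := (mul_eq_zero.mp h0.symm).resolve_right (norm_ne_zero_iff.mpr hv)
    exact sub_eq_zero.mp (norm_eq_zero.mp h1)
  -- polarization identities
  have hP1 : ∀ (a b : C) (v : V), ⟪J a v, J b v⟫ = ⟪a, b⟫ * ⟪v, v⟫ := by
    intro a b v
    have hab : J (a + b) v = J a v + J b v := by simp [map_add]
    have h1 : ‖J (a + b) v‖ ^ 2 = (‖a + b‖ * ‖v‖) ^ 2 := by rw [hJnorm]
    rw [hab, norm_add_sq_real, mul_pow, norm_add_sq_real] at h1
    have hva : ‖J a v‖ ^ 2 = ‖a‖ ^ 2 * ‖v‖ ^ 2 := by rw [hJnorm]; ring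
    have hvb : ‖J b v‖ ^ 2 = ‖b‖ ^ 2 * ‖v‖ ^ 2 := by rw [hJnorm]; ring
    have hvv : ⟪v, v⟫ = ‖v‖ ^ 2 := real_inner_self_eq_norm_sq v
    linear_combination h1 / 2 - hva / 2 - hvb / 2 - ⟪a, b⟫ * hvv
  have hP2 : ∀ (a : C) (u w : V), ⟪J a u, J a w⟫ = ⟪a, a⟫ * ⟪u, w⟫ := by
    intro a u w
    have hab : J a (u + w) = J a u + J a w := by simp [map_add]
    have h1 : ‖J a (u + w)‖ ^ 2 = (‖a‖ * ‖u + w‖) ^ 2 := by rw [hJnorm]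
    rw [hab, norm_add_sq_real, mul_pow, norm_add_sq_real] at h1
    have hva : ‖J a u‖ ^ 2 = ‖a‖ ^ 2 * ‖u‖ ^ 2 := by rw [hJnorm]; ring
    have hvb : ‖J a w‖ ^ 2 = ‖a‖ ^ 2 * ‖w‖ ^ 2 := by rw [hJnorm]; ring
    have haa : ⟪a, a⟫ = ‖a‖ ^ 2 := real_inner_self_eq_norm_sq a
    linear_combination h1 / 2 - hva / 2 - hvb / 2 - ⟪u, w⟫ * haa
  have hP3 : ∀ (a b : C) (u w : V), ⟪J a u, J b w⟫ + ⟪J b u, J a w⟫ = 2 * ⟪a, b⟫ * ⟪u, w⟫ := by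
    intro a b u w
    have h := hP2 (a + b) u w
    have hu' : J (a + b) u = J a u + J b u := by simp [map_add]
    have hw' : J (a + b) w = J a w + J b w := by simp [map_add]
    rw [hu', hw'] at h
    simp only [inner_add_left, inner_add_right] at h
    have h1 := hP2 a u w; have h2 := hP2 b u w
    have hc : ⟪b, a⟫ = ⟪a, b⟫ := real_inner_comm a b
    linear_combination h - h1 - h2 + ⟪u, w⟫ * hc
  have hP4 : ∀ (a b : C) (u w : V), ⟪J a u, J b w⟫ + ⟪J a w, J b u⟫ = 2 * ⟪a, b⟫ * ⟪u, w⟫ := by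
    intro a b u w
    have h := hP1 a b (u + w)
    have hu' : J a (u + w) = J a u + J a w := by simp [map_add]
    have hw' : J b (u + w) = J b u + J b w := by simp [map_add]
    rw [hu', hw'] at h
    simp only [inner_add_left, inner_add_right] at h
    have h1 := hP1 a b u; have h2 := hP1 a b w
    have hc : ⟪w, u⟫ = ⟪u, w⟫ := real_inner_comm u w
    linear_combination h - h1 - h2 + ⟪a, b⟫ * hc
  -- the key lemma: associativity at one point gives independence
  have key : ∀ v₀ : V, v₀ ≠ 0 →
      (∀ ζ η ξ : C, mul v₀ (mul v₀ ζ η) ξ = mul v₀ ζ (mul v₀ η ξ)) →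
      ∀ u : V, u ≠ 0 → mul u = mul v₀ := by
    intro v₀ hv₀ hassoc u hu
    funext ζ η
    set W : Submodule ℝ V := LinearMap.range (J.flip v₀) with hWdef
    haveI hWfd : FiniteDimensional ℝ W := inferInstance
    haveI : CompleteSpace W := FiniteDimensional.complete ℝ W
    have hdisj : ∀ x : V, x ∈ W → x ∈ Wᗮ → x = 0 := by
      intro x h1 h2
      exact Submodule.disjoint_def.mp (Submodule.orthogonal_disjoint W) x h1 h2
    have hTW : ∀ x ∈ W, J ζ (J η x) = J (mul v₀ ζ η) x := by
      rintro x ⟨ξ, rfl⟩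
      show J ζ (J η (J ξ v₀)) = J (mul v₀ ζ η) (J ξ v₀)
      rw [← hmul v₀ hv₀ η ξ, ← hmul v₀ hv₀ ζ (mul v₀ η ξ),
        ← hmul v₀ hv₀ (mul v₀ ζ η) ξ, hassoc]
    have hJW : ∀ (a : C) (x : V), x ∈ W → J a x ∈ W := by
      rintro a x ⟨ξ, rfl⟩
      exact ⟨mul v₀ a ξ, hmul v₀ hv₀ a ξ⟩
    have hJperp : ∀ (a : C) (x : V), x ∈ Wᗮ → J a x ∈ Wᗮ := by
      intro a x hx
      by_cases ha : a = 0
      · rw [ha, map_zero]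
        exact (Wᗮ).zero_mem
      · rw [Submodule.mem_orthogonal]
        intro w hw
        set g : W →ₗ[ℝ] W := (J a).restrict (fun y hy => hJW a y hy) with hg
        have hginj : Function.Injective g := by
          intro y₁ y₂ hy
          apply Subtype.ext
          have hvals : J a (y₁ : V) = J a (y₂ : V) := congrArg Subtype.val hy
          have h0 : ‖J a ((y₁ : V) - (y₂ : V))‖ = ‖a‖ * ‖(y₁ : V) - (y₂ : V)‖ := hJnorm _ _
          rw [map_sub, hvals, sub_self, norm_zero] at h0
          have h1 := (mul_eq_zero.mp h0.symm).resolve_left (norm_ne_zero_iff.mpr ha)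
          exact sub_eq_zero.mp (norm_eq_zero.mp h1)
        obtain ⟨y, hy⟩ := LinearMap.injective_iff_surjective.mp hginj ⟨w, hw⟩
        have hwval : J a (y : V) = w := congrArg Subtype.val hy
        rw [← hwval, hP2]
        rw [(Submodule.mem_orthogonal W x).mp hx (y : V) y.2, mul_zero]
    have claimA : ∀ (x w y : V), w ∈ W → y ∈ Wᗮ → x = w + y → w ≠ 0 →
        mul x ζ η = mul v₀ ζ η := by
      intro x w y hwW hyW hxwy hw0
      have hx0 : x ≠ 0 := by
        intro h0
        apply hw0
        rw [h0] at hxwy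
        have hwy : w = -y := eq_neg_of_add_eq_zero_left hxwy.symm
        exact hdisj w hwW (hwy ▸ (Wᗮ).neg_mem hyW)
      have hJx : J (mul x ζ η) x = J ζ (J η x) := hmul x hx0 ζ η
      have hTy : J ζ (J η y) - J (mul v₀ ζ η) y ∈ Wᗮ :=
        sub_mem (hJperp ζ _ (hJperp η y hyW)) (hJperp (mul v₀ ζ η) y hyW)
      have h1 : J (mul x ζ η - mul v₀ ζ η) x = J ζ (J η y) - J (mul v₀ ζ η) y := by
        rw [map_sub, LinearMap.sub_apply, hJx, hxwy]
        have hη : J η (w + y) = J η w + J η y := map_add _ _ _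
        have hηζ : J ζ (J η w + J η y) = J ζ (J η w) + J ζ (J η y) := map_add _ _ _
        have hcw : J (mul v₀ ζ η) (w + y) = J (mul v₀ ζ η) w + J (mul v₀ ζ η) y := map_add _ _ _
        rw [hη, hηζ, hcw, hTW w hwW]
        abel
      have h2 : J (mul x ζ η - mul v₀ ζ η) x
          = J (mul x ζ η - mul v₀ ζ η) w + J (mul x ζ η - mul v₀ ζ η) y := by
        rw [hxwy, map_add]
      have hwmem : J (mul x ζ η - mul v₀ ζ η) w ∈ W := hJW _ _ hwW
      have hymem : J (mul x ζ η - mul v₀ ζ η) y ∈ Wᗮ := hJperp _ _ hyW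
      have heq : J (mul x ζ η - mul v₀ ζ η) w
          = (J ζ (J η y) - J (mul v₀ ζ η) y) - J (mul x ζ η - mul v₀ ζ η) y := by
        rw [← h1, h2]; abel
      have hperpmem : J (mul x ζ η - mul v₀ ζ η) w ∈ Wᗮ := heq ▸ sub_mem hTy hymem
      have hzero : J (mul x ζ η - mul v₀ ζ η) w = 0 := hdisj _ hwmem hperpmem
      have hfin : mul x ζ η - mul v₀ ζ η = (0 : C) := by
        apply hJinj w hw0
        rw [hzero, map_zero]
        rfl
      exact sub_eq_zero.mp hfin
    have hTperp : ∀ y : V, y ∈ Wᗮ → J ζ (J η y) = J (mul v₀ ζ η) y := by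
      intro y hy
      by_cases hy0 : y = 0
      · rw [hy0]; simp
      · have hv₀W : v₀ ∈ W := ⟨e, hJ1 v₀⟩
        have hvy0 : v₀ + y ≠ 0 := by
          intro h0
          exact hv₀ (hdisj v₀ hv₀W ((eq_neg_of_add_eq_zero_left h0) ▸ (Wᗮ).neg_mem hy))
        have hmx : mul (v₀ + y) ζ η = mul v₀ ζ η :=
          claimA (v₀ + y) v₀ y hv₀W hy rfl hv₀
        have h1 : J ζ (J η (v₀ + y)) = J (mul v₀ ζ η) (v₀ + y) := by
          rw [← hmx]
          exact (hmul (v₀ + y) hvy0 ζ η).symm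
        have hη : J η (v₀ + y) = J η v₀ + J η y := map_add _ _ _
        have hηζ : J ζ (J η v₀ + J η y) = J ζ (J η v₀) + J ζ (J η y) := map_add _ _ _
        rw [hη, hηζ, map_add, hTW v₀ hv₀W] at h1
        exact add_left_cancel h1
    have hT : ∀ x : V, J ζ (J η x) = J (mul v₀ ζ η) x := by
      intro x
      obtain ⟨w, hw, y, hy, rfl⟩ := W.exists_add_mem_mem_orthogonal x
      have hη : J η (w + y) = J η w + J η y := map_add _ _ _
      have hηζ : J ζ (J η w + J η y) = J ζ (J η w) + J ζ (J η y) := map_add _ _ _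
      rw [hη, hηζ, map_add, hTW w hw, hTperp y hy]
    apply hJinj u hu
    rw [hmul u hu, hT u]
  constructor
  · constructor
    · -- independence implies associativity
      intro hindep
      obtain ⟨v, hv⟩ := hVnt
      refine ⟨v, hv, ?_⟩
      intro ζ η ξ
      have hom : ∀ (a b : C) (x : V), J (mul v a b) x = J a (J b x) := by
        intro a b x
        by_cases hx : x = 0
        · rw [hx]; simp
        · rw [show mul v = mul x from (hindep v x hv hx), hmul x hx]
      apply hJinj v hv
      rw [hmul v hv (mul v ζ η) ξ, hom ζ η (J ξ v), hom ζ (mul v η ξ) v, hmul v hv η ξ]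
    · -- associativity implies independence
      rintro ⟨v₀, hv₀, hassoc⟩ u v hu hv
      rw [key v₀ hv₀ hassoc u hu, key v₀ hv₀ hassoc v hv]
  · -- dimension at most four
    intro hdim u v hu hv
    obtain ⟨v₀, hv₀⟩ := hVnt
    -- bilinearity of mul v₀
    have hadd1 : ∀ a b c : C, mul v₀ (a + b) c = mul v₀ a c + mul v₀ b c := by
      intro a b c
      apply hJinj v₀ hv₀
      simp only [map_add, LinearMap.add_apply, hmul v₀ hv₀]
    have hsmul1 : ∀ (r : ℝ) (a c : C), mul v₀ (r • a) c = r • mul v₀ a c := by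
      intro r a c
      apply hJinj v₀ hv₀
      simp only [map_smul, LinearMap.smul_apply, hmul v₀ hv₀]
    have hadd2 : ∀ a b c : C, mul v₀ a (b + c) = mul v₀ a b + mul v₀ a c := by
      intro a b c
      apply hJinj v₀ hv₀
      simp only [map_add, LinearMap.add_apply, hmul v₀ hv₀]
    have hsmul2 : ∀ (r : ℝ) (a c : C), mul v₀ a (r • c) = r • mul v₀ a c := by
      intro r a c
      apply hJinj v₀ hv₀
      simp only [map_smul, LinearMap.smul_apply, hmul v₀ hv₀]
    set M : C →ₗ[ℝ] C →ₗ[ℝ] C :=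
      LinearMap.mk₂ ℝ (mul v₀) hadd1 hsmul1 hadd2 hsmul2 with hM
    have hMapp : ∀ a b : C, M a b = mul v₀ a b := fun a b => rfl
    have hul : ∀ a : C, M e a = a := by
      intro a
      rw [hMapp]
      apply hJinj v₀ hv₀
      rw [hmul v₀ hv₀, hJ1]
    have hur : ∀ a : C, M a e = a := by
      intro a
      rw [hMapp]
      apply hJinj v₀ hv₀
      rw [hmul v₀ hv₀, hJ1]
    have hvv : ⟪v₀, v₀⟫ ≠ 0 := by
      intro h
      exact hv₀ (inner_self_eq_zero.mp h)
    have hprod : ∀ a b y z : C,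
        ⟪mul v₀ a y, mul v₀ b z⟫ * ⟪v₀, v₀⟫ = ⟪J a (J y v₀), J b (J z v₀)⟫ := by
      intro a b y z
      rw [← hP1, hmul v₀ hv₀, hmul v₀ hv₀]
    have hN : ∀ a b y z : C, ⟪M a y, M b z⟫ + ⟪M b y, M a z⟫ = 2 * ⟪a, b⟫ * ⟪y, z⟫ := by
      intro a b y z
      have h3 := hP3 a b (J y v₀) (J z v₀)
      have hy := hP1 y z v₀
      have h₁ := hprod a b y z
      have h₂ := hprod b a y z
      have hmain : (⟪M a y, M b z⟫ + ⟪M b y, M a z⟫) * ⟪v₀, v₀⟫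
          = (2 * ⟪a, b⟫ * ⟪y, z⟫) * ⟪v₀, v₀⟫ := by
        rw [hMapp, hMapp, hMapp, hMapp]
        linear_combination h₁ + h₂ + h3 + 2 * ⟪a, b⟫ * hy
      exact mul_right_cancel₀ hvv hmain
    have hN' : ∀ a b y z : C, ⟪M a y, M b z⟫ + ⟪M a z, M b y⟫ = 2 * ⟪a, b⟫ * ⟪y, z⟫ := by
      intro a b y z
      have h4 := hP4 a b (J y v₀) (J z v₀)
      have hy := hP1 y z v₀
      have h₁ := hprod a b y z
      have h₂ := hprod a b z y
      have hmain : (⟪M a y, M b z⟫ + ⟪M a z, M b y⟫) * ⟪v₀, v₀⟫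
          = (2 * ⟪a, b⟫ * ⟪y, z⟫) * ⟪v₀, v₀⟫ := by
        rw [hMapp, hMapp, hMapp, hMapp]
        linear_combination h₁ + h₂ + h4 + 2 * ⟪a, b⟫ * hy
      exact mul_right_cancel₀ hvv hmain
    have hassocM := comp_assoc_of_finrank_le_four hdim e he0 M hul hur hN hN'
    have hassoc : ∀ ζ η ξ : C, mul v₀ (mul v₀ ζ η) ξ = mul v₀ ζ (mul v₀ η ξ) :=
      fun ζ η ξ => hassocM ζ η ξ
    rw [key v₀ hv₀ hassoc u hu, key v₀ hv₀ hassoc v hv]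
end

section
/- Let (C,V,J) be a J²C-module and v ∈ V nonzero. For any ζ, η ∈ C the element ζ ·_v (η ·_v ζ) equals the Clifford algebra product ζηζ (computed via the decomposition ζ = a1 + z with z ∈ C'), and in particular is independent of v. -/
/-!
If `‖J ζ v‖ = ‖ζ‖ ‖v‖` and `J e = id`, then every `J z` with `z ⟂ e` is skew-adjoint, hence
`J z ∘ J z = -‖z‖²`, so `J` extends to a representation `ρ` of the Clifford algebra of `(ℝ e)ᗮ`
with `J ξ = ρ (a + z)` for `ξ = a e + z`. In a Clifford algebra the product
`(a + z) (b + w) (a + z)` is again a scalar plus a vector, namely the image of some `ξ ∈ C`.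
Therefore `J ζ ∘ J η ∘ J ζ = J ξ`, and since `ξ ↦ J ξ v` is injective for `v ≠ 0`,
`ζ ·_v (η ·_v ζ) = ξ` for every such `v`.
-/

open scoped RealInnerProductSpace

namespace CliffordAlgebra

variable {R M : Type*} [CommRing R] [AddCommGroup M] [Module R M] {Q : QuadraticForm R M}

theorem paravector_mul_mul_self (a b : R) (x y : M) :
    (algebraMap R _ a + ι Q x) * (algebraMap R _ b + ι Q y) * (algebraMap R _ a + ι Q x) =
      algebraMap R _ (a ^ 2 * b + a * QuadraticMap.polar Q x y + b * Q x) +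
        ι Q ((2 * a * b + QuadraticMap.polar Q x y) • x + (a ^ 2 - Q x) • y) := by
  have hxx : ι Q x * ι Q x = Q x • 1 := by rw [ι_sq_scalar, Algebra.algebraMap_eq_smul_one]
  have hyx : ι Q y * ι Q x = QuadraticMap.polar Q x y • 1 - ι Q x * ι Q y := by
    rw [ι_mul_ι_comm, QuadraticMap.polar_comm, Algebra.algebraMap_eq_smul_one]
  have hxyx : ι Q x * (ι Q y * ι Q x) = QuadraticMap.polar Q x y • ι Q x - Q x • ι Q y := by
    rw [hyx, mul_sub, mul_smul_comm, mul_one, ← mul_assoc, hxx, smul_mul_assoc, one_mul]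
  simp only [Algebra.algebraMap_eq_smul_one, map_add, map_smul, add_mul, mul_add,
    smul_mul_assoc, mul_smul_comm, one_mul, mul_one, mul_assoc]
  rw [hxyx, hxx, hyx]
  module

end CliffordAlgebra

section

variable {C V : Type*} [NormedAddCommGroup C] [InnerProductSpace ℝ C]
  [NormedAddCommGroup V] [InnerProductSpace ℝ V]

section Paravector

variable {e : C}

/-- The paper's `ξ = a 1 + z ∈ ℝ1 ⊕ C'`, read in the Clifford algebra of `C' = (ℝ e)ᗮ`. -/
noncomputable def toClifford (e : C) (Q : QuadraticForm ℝ (Submodule.span ℝ {e})ᗮ) (ξ : C) :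
    CliffordAlgebra Q :=
  algebraMap ℝ _ ⟪ξ, e⟫ +
    CliffordAlgebra.ι Q (Submodule.orthogonalProjectionOnto ((Submodule.span ℝ {e})ᗮ) ξ)

theorem eq_inner_smul_add_orthogonalProjectionOnto (he : ‖e‖ = 1) (ξ : C) :
    ξ = ⟪ξ, e⟫ • e + Submodule.orthogonalProjectionOnto ((Submodule.span ℝ {e})ᗮ) ξ := by
  conv_lhs => rw [← (Submodule.span ℝ {e}).starProjection_add_starProjection_orthogonal ξ]
  rw [Submodule.starProjection_unit_singleton ℝ he, real_inner_comm]
  rfl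

theorem toClifford_smul_add (he : ‖e‖ = 1) (Q : QuadraticForm ℝ (Submodule.span ℝ {e})ᗮ)
    (c : ℝ) (y : (Submodule.span ℝ {e})ᗮ) :
    toClifford e Q (c • e + y) = algebraMap ℝ _ c + CliffordAlgebra.ι Q y := by
  have hye : ⟪(y : C), e⟫ = 0 :=
    Submodule.inner_left_of_mem_orthogonal (Submodule.mem_span_singleton_self e) y.2
  have hee : ⟪e, e⟫ = 1 := by rw [real_inner_self_eq_norm_sq, he, one_pow]
  simp only [toClifford, map_add, map_smul, inner_add_left, real_inner_smul_left, hee, hye,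
    Submodule.orthogonalProjectionOnto_orthogonalComplement_singleton_eq_zero,
    Submodule.orthogonalProjectionOnto_mem_subspace_eq_self, smul_zero, zero_add, mul_one, add_zero]

theorem exists_toClifford_eq_mul_mul_self (he : ‖e‖ = 1)
    (Q : QuadraticForm ℝ (Submodule.span ℝ {e})ᗮ) (ζ η : C) :
    ∃ ξ : C, toClifford e Q ξ = toClifford e Q ζ * toClifford e Q η * toClifford e Q ζ := by
  unfold toClifford
  rw [CliffordAlgebra.paravector_mul_mul_self]
  exact ⟨_, toClifford_smul_add he Q _ _⟩

end Paravector

namespace LinearMap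

variable (J : C →ₗ[ℝ] V →ₗ[ℝ] V)

theorem injective_flip_of_norm_apply (hJnorm : ∀ ζ v, ‖J ζ v‖ = ‖ζ‖ * ‖v‖) {w : V} (hw : w ≠ 0) :
    Function.Injective (J.flip w) := by
  rw [← LinearMap.ker_eq_bot, LinearMap.ker_eq_bot']
  intro ξ hξ
  simpa [flip_apply, hJnorm, norm_eq_zero, hw] using congrArg norm hξ

theorem inner_apply_apply_of_norm_apply (hJnorm : ∀ ζ v, ‖J ζ v‖ = ‖ζ‖ * ‖v‖) (ξ₁ ξ₂ : C) (w : V) :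
    ⟪J ξ₁ w, J ξ₂ w⟫ = ⟪ξ₁, ξ₂⟫ * ‖w‖ ^ 2 := by
  have h := norm_add_sq_real (J ξ₁ w) (J ξ₂ w)
  rw [← add_apply, ← map_add, hJnorm, hJnorm, hJnorm, mul_pow, mul_pow, mul_pow,
    norm_add_sq_real] at h
  linarith

variable {e : C} (hJ1 : ∀ v, J e v = v) (hJnorm : ∀ ζ v, ‖J ζ v‖ = ‖ζ‖ * ‖v‖)
include hJ1 hJnorm

theorem inner_apply_left_of_inner_eq_zero {z : C} (hz : ⟪z, e⟫ = 0) (x y : V) :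
    ⟪J z x, y⟫ = -⟪x, J z y⟫ := by
  have hself (w : V) : ⟪J z w, w⟫ = 0 := by
    simpa [hJ1, hz] using J.inner_apply_apply_of_norm_apply hJnorm z e w
  have h := hself (x + y)
  simp only [map_add, inner_add_left, inner_add_right, hself, real_inner_comm x (J z y)] at h
  linarith

theorem apply_apply_of_inner_eq_zero {z : C} (hz : ⟪z, e⟫ = 0) (w : V) :
    J z (J z w) = (-‖z‖ ^ 2) • w := by
  have hinner : ⟪J z (J z w), w⟫ = -(‖z‖ ^ 2 * ‖w‖ ^ 2) := by
    rw [J.inner_apply_left_of_inner_eq_zero hJ1 hJnorm hz, real_inner_self_eq_norm_sq, hJnorm,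
      mul_pow]
  rw [← sub_eq_zero, ← norm_eq_zero, ← sq_eq_zero_iff, norm_sub_sq_real, real_inner_smul_right,
    hinner, norm_smul, hJnorm, hJnorm, norm_neg, norm_pow, norm_norm]
  ring

theorem exists_algHom_cliffordAlgebra_apply_eq (he : ‖e‖ = 1)
    (Q : QuadraticForm ℝ (Submodule.span ℝ {e})ᗮ) (hQ : ∀ z, Q z = -‖(z : C)‖ ^ 2) :
    ∃ ρ : CliffordAlgebra Q →ₐ[ℝ] Module.End ℝ V, ∀ ξ, J ξ = ρ (toClifford e Q ξ) := by
  have hsq (z : (Submodule.span ℝ {e})ᗮ) :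
      (J ∘ₗ Submodule.subtype _) z * (J ∘ₗ Submodule.subtype _) z = algebraMap ℝ _ (Q z) := by
    have hz : ⟪(z : C), e⟫ = 0 :=
      Submodule.inner_left_of_mem_orthogonal (Submodule.mem_span_singleton_self e) z.2
    ext w
    rw [Module.End.mul_apply, comp_apply, Submodule.subtype_apply,
      J.apply_apply_of_inner_eq_zero hJ1 hJnorm hz, hQ, Module.algebraMap_end_apply]
  refine ⟨CliffordAlgebra.lift Q ⟨_, hsq⟩, fun ξ => ?_⟩
  ext w
  conv_lhs => rw [eq_inner_smul_add_orthogonalProjectionOnto he ξ]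
  simp [toClifford, hJ1, Module.algebraMap_end_apply]

end LinearMap

end

theorem stmt7_general {C V : Type*} [NormedAddCommGroup C] [InnerProductSpace ℝ C]
    [NormedAddCommGroup V] [InnerProductSpace ℝ V]
    (e : C) (he : ‖e‖ = 1) (J : C →ₗ[ℝ] V →ₗ[ℝ] V)
    (hJ1 : ∀ v : V, J e v = v)
    (hJnorm : ∀ (ζ : C) (v : V), ‖J ζ v‖ = ‖ζ‖ * ‖v‖)
    (Q : QuadraticForm ℝ ↥((Submodule.span ℝ {e})ᗮ))
    (hQ : ∀ z : ↥((Submodule.span ℝ {e})ᗮ), Q z = -‖(z : C)‖ ^ 2)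
    (u v : V) (hu : u ≠ 0) (hv : v ≠ 0)
    (mulu mulv : C → C → C)
    (hmulu : ∀ ζ η : C, J (mulu ζ η) u = J ζ (J η u))
    (hmulv : ∀ ζ η : C, J (mulv ζ η) v = J ζ (J η v))
    (ζ η : C) :
    mulu ζ (mulu η ζ) = mulv ζ (mulv η ζ) ∧
    ∀ f : C → CliffordAlgebra Q,
      (∀ ξ : C, f ξ = algebraMap ℝ (CliffordAlgebra Q) ⟪ξ, e⟫ +
        CliffordAlgebra.ι Q (Submodule.orthogonalProjectionOnto ((Submodule.span ℝ {e})ᗮ) ξ)) →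
      f (mulv ζ (mulv η ζ)) = f ζ * f η * f ζ := by
  obtain ⟨ρ, hρ⟩ := J.exists_algHom_cliffordAlgebra_apply_eq hJ1 hJnorm he Q hQ
  obtain ⟨ξ, hξ⟩ := exists_toClifford_eq_mul_mul_self he Q ζ η
  have hJξ : J ξ = J ζ * J η * J ζ := by rw [hρ, hρ, hρ, hξ, map_mul, map_mul]
  have mul_mul_self_eq {w : V} (hw : w ≠ 0) (mul : C → C → C)
      (hmul : ∀ ζ η : C, J (mul ζ η) w = J ζ (J η w)) : mul ζ (mul η ζ) = ξ :=
    J.injective_flip_of_norm_apply hJnorm hw (by simp [hmul, hJξ])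
  refine ⟨(mul_mul_self_eq hu mulu hmulu).trans (mul_mul_self_eq hv mulv hmulv).symm, ?_⟩
  intro f hf
  obtain rfl : f = toClifford e Q := funext hf
  rw [mul_mul_self_eq hv mulv hmulv, hξ]

theorem stmt7 {C V : Type*} [NormedAddCommGroup C] [InnerProductSpace ℝ C]
    [FiniteDimensional ℝ C] [NormedAddCommGroup V] [InnerProductSpace ℝ V]
    (e : C) (he : ‖e‖ = 1) (J : C →ₗ[ℝ] V →ₗ[ℝ] V)
    (hJ1 : ∀ v : V, J e v = v)
    (hJnorm : ∀ (ζ : C) (v : V), ‖J ζ v‖ = ‖ζ‖ * ‖v‖)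
    (hJ2 : ∀ (v : V) (ζ η : C), ∃ ξ : C, J ζ (J η v) = J ξ v)
    (Q : QuadraticForm ℝ ↥((Submodule.span ℝ {e})ᗮ))
    (hQ : ∀ z : ↥((Submodule.span ℝ {e})ᗮ), Q z = -‖(z : C)‖ ^ 2)
    (u v : V) (hu : u ≠ 0) (hv : v ≠ 0)
    (mulu mulv : C → C → C)
    (hmulu : ∀ ζ η : C, J (mulu ζ η) u = J ζ (J η u))
    (hmulv : ∀ ζ η : C, J (mulv ζ η) v = J ζ (J η v))
    (ζ η : C) :
    mulu ζ (mulu η ζ) = mulv ζ (mulv η ζ) ∧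
    ∀ f : C → CliffordAlgebra Q,
      (∀ ξ : C, f ξ = algebraMap ℝ (CliffordAlgebra Q) ⟪ξ, e⟫ +
        CliffordAlgebra.ι Q (Submodule.orthogonalProjectionOnto ((Submodule.span ℝ {e})ᗮ) ξ)) →
      f (mulv ζ (mulv η ζ)) = f ζ * f η * f ζ :=
  stmt7_general e he J hJ1 hJnorm Q hQ u v hu hv mulu mulv hmulu hmulv ζ η
end

section
/- Let (C,V,J) be a J²C-module and v ∈ V nonzero. For all ζ, η ∈ C one has Re(ζ ·_v η) = ⟨ζ, η̄⟩, where Re ζ = ⟨ζ, 1⟩ and η̄ = 2⟨η,1⟩1 − η. -/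
open scoped RealInnerProductSpace

theorem stmt8 {C V : Type*} [NormedAddCommGroup C] [InnerProductSpace ℝ C]
    [FiniteDimensional ℝ C] [NormedAddCommGroup V] [InnerProductSpace ℝ V]
    (e : C) (he : ‖e‖ = 1) (J : C →ₗ[ℝ] V →ₗ[ℝ] V)
    (hJ1 : ∀ v : V, J e v = v)
    (hJnorm : ∀ (ζ : C) (v : V), ‖J ζ v‖ = ‖ζ‖ * ‖v‖)
    (hJ2 : ∀ (v : V) (ζ η : C), ∃ ξ : C, J ζ (J η v) = J ξ v)
    (v : V) (hv : v ≠ 0)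
    (mul : C → C → C)
    (hmul : ∀ ζ η : C, J (mul ζ η) v = J ζ (J η v)) :
    ∀ ζ η : C, ⟪mul ζ η, e⟫ = ⟪ζ, (2 * ⟪η, e⟫) • e - η⟫ := by
  have step0 : ∀ (ζ : C) (u : V), ⟪J ζ u, J ζ u⟫ = ⟪ζ, ζ⟫ * ⟪u, u⟫ := by
    intro ζ u
    rw [real_inner_self_eq_norm_mul_norm, real_inner_self_eq_norm_mul_norm,
      real_inner_self_eq_norm_mul_norm, hJnorm]
    ring
  have step1 : ∀ (ζ η : C) (u : V), ⟪J ζ u, J η u⟫ = ⟪ζ, η⟫ * ⟪u, u⟫ := by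
    intro ζ η u
    have h := step0 (ζ + η) u
    rw [map_add, LinearMap.add_apply, real_inner_add_add_self,
      real_inner_add_add_self, step0, step0] at h
    nlinarith [h]
  have step2 : ∀ (ζ η : C) (u w : V),
      ⟪J ζ u, J η w⟫ + ⟪J ζ w, J η u⟫ = 2 * ⟪ζ, η⟫ * ⟪u, w⟫ := by
    intro ζ η u w
    have h := step1 ζ η (u + w)
    simp only [map_add, LinearMap.add_apply, inner_add_left, inner_add_right] at h
    have huw : ⟪w, u⟫ = ⟪u, w⟫ := real_inner_comm _ _
    rw [huw] at h
    linear_combination h - step1 ζ η u - step1 ζ η w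
  intro ζ η
  have hvv : ⟪v, v⟫ ≠ 0 := fun h => hv (inner_self_eq_zero.mp h)
  have hA : ⟪mul ζ η, e⟫ * ⟪v, v⟫ = ⟪J ζ (J η v), v⟫ := by
    have := step1 (mul ζ η) e v
    rw [hJ1, hmul] at this
    linarith
  have hB := step2 ζ e (J η v) v
  rw [hJ1, hJ1] at hB
  have hC : ⟪J ζ v, J η v⟫ = ⟪ζ, η⟫ * ⟪v, v⟫ := step1 ζ η v
  have hD : ⟪J η v, v⟫ = ⟪η, e⟫ * ⟪v, v⟫ := by
    have := step1 η e v; rwa [hJ1] at this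
  have hc3 : ⟪J ζ v, J η v⟫ = ⟪J η v, J ζ v⟫ := real_inner_comm _ _
  have key : ⟪mul ζ η, e⟫ = 2 * ⟪ζ, e⟫ * ⟪η, e⟫ - ⟪ζ, η⟫ := by
    have : ⟪mul ζ η, e⟫ * ⟪v, v⟫ = (2 * ⟪ζ, e⟫ * ⟪η, e⟫ - ⟪ζ, η⟫) * ⟪v, v⟫ := by
      rw [hC, hD] at hB
      rw [hA]; linear_combination hB
    exact mul_right_cancel₀ hvv this
  rw [key, inner_sub_right, real_inner_smul_right]
  ring
end

section
/- Every J²C-module (C,V,J) with V ≠ 0 and (C, ·) associative (i.e., ·_v independent of v) is isomorphic to (F, Fⁿ) where F is the normed division algebra (C, ·_v), V ≅ Fⁿ via an orthonormal C-basis, and J is left multiplication by elements of F. -/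
/-!
Each line `C v` is `J`-invariant, and since every `J ζ` is a similarity of ratio `‖ζ‖`, the
orthogonal complement of a `J`-invariant subspace is again `J`-invariant. Splitting off `C v` for
a unit vector `v` and recursing on its complement yields unit vectors `v₁, …, vₙ` whose
`C`-lines are pairwise orthogonal and span `V`. Polarizing `‖J ζ v‖ = ‖ζ‖ ‖v‖` in `ζ` shows
that `x ↦ ∑ J (xᵢ) vᵢ` preserves inner products, and associativity of `mul` on every `C v`
makes it intertwine `mul` with `J`.
-/

open Function
open scoped RealInnerProductSpace

theorem Fin.iSup_cons {α : Type*} [CompleteLattice α] {n : ℕ} (a : α) (f : Fin n → α) :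
    ⨆ i, (Fin.cons a f : Fin (n + 1) → α) i = a ⊔ ⨆ i, f i := by
  simp only [iSup, Fin.range_cons, sSup_insert]

theorem Pairwise.fin_cons {α : Type*} {r : α → α → Prop} [Std.Symm r] {n : ℕ} {a : α}
    {f : Fin n → α} (ha : ∀ i, r a (f i)) (hf : Pairwise (r on f)) :
    Pairwise (r on (Fin.cons a f : Fin (n + 1) → α)) := by
  intro i j hij
  induction i using Fin.cases <;> induction j using Fin.cases
  · exact absurd rfl hij
  · exact ha _
  · exact symm (ha _)
  · exact hf (ne_of_apply_ne Fin.succ hij)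

section Similarity

variable {E F : Type*} [NormedAddCommGroup E] [InnerProductSpace ℝ E]
  [NormedAddCommGroup F] [InnerProductSpace ℝ F] {f : E →ₗ[ℝ] F} {c : ℝ}

theorem inner_map_map_of_norm_map_eq_mul (hf : ∀ x, ‖f x‖ = c * ‖x‖) (x y : E) :
    ⟪f x, f y⟫ = c ^ 2 * ⟪x, y⟫ := by
  rw [real_inner_eq_norm_add_mul_self_sub_norm_mul_self_sub_norm_mul_self_div_two,
    real_inner_eq_norm_add_mul_self_sub_norm_mul_self_sub_norm_mul_self_div_two,
    ← map_add, hf, hf, hf]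
  ring

theorem injective_of_norm_map_eq_mul (hf : ∀ x, ‖f x‖ = c * ‖x‖) (hc : c ≠ 0) :
    Injective f := by
  refine (injective_iff_map_eq_zero f).mpr fun x hx => ?_
  simpa [hf, hc] using congrArg norm hx

theorem Submodule.orthogonal_mem_invtSubmodule_of_norm_map_eq_mul [FiniteDimensional ℝ E]
    {T : Module.End ℝ E} (hT : ∀ x, ‖T x‖ = c * ‖x‖) {W : Submodule ℝ E}
    (hW : W ∈ T.invtSubmodule) : Wᗮ ∈ T.invtSubmodule := by
  rcases eq_or_ne c 0 with rfl | hc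
  · intro w _
    simp [norm_eq_zero.mp (by simpa using hT w)]
  have hmap : W.map T = W :=
    eq_of_le_of_finrank_le ((T.mem_invtSubmodule_iff_map_le).mp hW)
      (W.equivMapOfInjective T (injective_of_norm_map_eq_mul hT hc)).finrank_eq.le
  intro w hw u hu
  rw [← hmap] at hu
  obtain ⟨u, hu, rfl⟩ := hu
  rw [inner_map_map_of_norm_map_eq_mul hT, hw u hu, mul_zero]

end Similarity

namespace CModule

variable {C V : Type*} [NormedAddCommGroup C] [InnerProductSpace ℝ C]
  [NormedAddCommGroup V] [InnerProductSpace ℝ V] (J : C →ₗ[ℝ] V →ₗ[ℝ] V)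

/-- The paper's `C v`. -/
def orbit (v : V) : Submodule ℝ V := LinearMap.range (J.flip v)

variable {J}

theorem apply_mem_orbit (ζ : C) (v : V) : J ζ v ∈ orbit J v := ⟨ζ, rfl⟩

theorem self_mem_orbit {e : C} (hJ1 : ∀ v : V, J e v = v) (v : V) : v ∈ orbit J v := by
  simpa only [hJ1] using apply_mem_orbit (J := J) e v

theorem orbit_mem_invtSubmodule (hJ2 : ∀ (v : V) (ζ η : C), ∃ ξ : C, J ζ (J η v) = J ξ v)
    (ζ : C) (v : V) : orbit J v ∈ Module.End.invtSubmodule (J ζ) := by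
  rintro _ ⟨η, rfl⟩
  obtain ⟨ξ, hξ⟩ := hJ2 v ζ η
  exact ⟨ξ, hξ.symm⟩

theorem orbit_le {W : Submodule ℝ V} (hW : ∀ ζ, W ∈ Module.End.invtSubmodule (J ζ)) {v : V}
    (hv : v ∈ W) : orbit J v ≤ W := by
  rintro _ ⟨ζ, rfl⟩
  exact hW ζ hv

theorem exists_unit_orbits_iSup_eq {e : C} (hJ1 : ∀ v : V, J e v = v)
    (hJnorm : ∀ (ζ : C) (v : V), ‖J ζ v‖ = ‖ζ‖ * ‖v‖)
    (hJ2 : ∀ (v : V) (ζ η : C), ∃ ξ : C, J ζ (J η v) = J ξ v) [FiniteDimensional ℝ V]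
    (W : Submodule ℝ V) (hW : ∀ ζ, W ∈ Module.End.invtSubmodule (J ζ)) :
    ∃ (n : ℕ) (v : Fin n → V), (∀ i, ‖v i‖ = 1) ∧
      Pairwise ((· ⟂ ·) on fun i => orbit J (v i)) ∧ ⨆ i, orbit J (v i) = W := by
  induction hk : Module.finrank ℝ W using Nat.strong_induction_on generalizing W with
  | _ k ih =>
    rcases eq_or_ne W ⊥ with rfl | hW₀
    · exact ⟨0, Fin.elim0, fun i => i.elim0, fun i => i.elim0, by simp⟩
    obtain ⟨w, hwW, hw₀⟩ := W.exists_mem_ne_zero_of_ne_bot hW₀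
    set v := ‖w‖⁻¹ • w
    have hv : ‖v‖ = 1 := norm_smul_inv_norm hw₀
    have hvW : v ∈ W := W.smul_mem _ hwW
    have hle : orbit J v ≤ W := orbit_le hW hvW
    set W' := (orbit J v)ᗮ ⊓ W
    have hW' : ∀ ζ, W' ∈ Module.End.invtSubmodule (J ζ) := fun ζ =>
      Module.End.invtSubmodule.inf_mem
        (Submodule.orthogonal_mem_invtSubmodule_of_norm_map_eq_mul (hJnorm ζ)
          (orbit_mem_invtSubmodule hJ2 ζ v)) (hW ζ)
    have hlt : W' < W := by
      refine lt_of_le_of_ne inf_le_right fun h => ?_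
      have hv' : v ∈ W' := h ▸ hvW
      have : v = 0 :=
        (Submodule.disjoint_def.mp (orbit J v).orthogonal_disjoint) v (self_mem_orbit hJ1 v) hv'.1
      simp [this] at hv
    obtain ⟨n, vs, hvs, horth, hspan⟩ :=
      ih _ (hk ▸ Submodule.finrank_lt_finrank_of_lt hlt) W' hW' rfl
    have hvs_le (i : Fin n) : orbit J (vs i) ≤ (orbit J v)ᗮ :=
      (hspan ▸ le_iSup (fun i => orbit J (vs i)) i).trans inf_le_left
    refine ⟨n + 1, Fin.cons v vs, Fin.cases hv hvs, ?_, ?_⟩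
    · rw [← comp_def, Fin.comp_cons]
      exact Pairwise.fin_cons (fun i => (Submodule.isOrtho_iff_le.mpr (hvs_le i)).symm) horth
    · rw [← comp_def, Fin.comp_cons, Fin.iSup_cons]
      exact hspan ▸ Submodule.sup_orthogonal_inf_of_hasOrthogonalProjection hle

variable (J) in
def linearCombination {n : ℕ} (v : Fin n → V) : PiLp 2 (fun _ : Fin n => C) →ₗ[ℝ] V :=
  ∑ i, J.flip (v i) ∘ₗ PiLp.projₗ 2 (fun _ => C) i

theorem linearCombination_apply {n : ℕ} (v : Fin n → V) (x : PiLp 2 (fun _ : Fin n => C)) :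
    linearCombination J v x = ∑ i, J (x i) (v i) := by
  simp [linearCombination]

variable (J) in
theorem range_linearCombination {n : ℕ} (v : Fin n → V) :
    LinearMap.range (linearCombination J v) = ⨆ i, orbit J (v i) := by
  refine le_antisymm ?_ (iSup_le fun i => ?_)
  · rintro _ ⟨x, rfl⟩
    rw [linearCombination_apply]
    exact Submodule.sum_mem_iSup fun i => apply_mem_orbit (x i) (v i)
  · classical
    rintro _ ⟨ζ, rfl⟩
    refine ⟨PiLp.single 2 i ζ, ?_⟩
    rw [linearCombination_apply, Finset.sum_eq_single_of_mem i (Finset.mem_univ i)]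
    · simp
    · intro j _ hji
      simp [hji]

theorem inner_linearCombination (hJnorm : ∀ (ζ : C) (v : V), ‖J ζ v‖ = ‖ζ‖ * ‖v‖) {n : ℕ}
    {v : Fin n → V} (hv : ∀ i, ‖v i‖ = 1) (horth : Pairwise ((· ⟂ ·) on fun i => orbit J (v i)))
    (x y : PiLp 2 (fun _ : Fin n => C)) :
    ⟪linearCombination J v x, linearCombination J v y⟫ = ⟪x, y⟫ := by
  rw [linearCombination_apply, linearCombination_apply, sum_inner, PiLp.inner_apply]
  refine Finset.sum_congr rfl fun i _ => ?_
  rw [inner_sum, Finset.sum_eq_single_of_mem i (Finset.mem_univ i)]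
  · have hJv : ∀ ζ, ‖J.flip (v i) ζ‖ = 1 * ‖ζ‖ := fun ζ => by simp [hJnorm, hv]
    simpa using inner_map_map_of_norm_map_eq_mul hJv (x i) (y i)
  · exact fun j _ hji => (horth hji.symm).inner_eq (apply_mem_orbit _ _) (apply_mem_orbit _ _)

end CModule

theorem stmt10_general {C V : Type*} [NormedAddCommGroup C] [InnerProductSpace ℝ C]
    [NormedAddCommGroup V] [InnerProductSpace ℝ V]
    [FiniteDimensional ℝ V]
    (e : C) (J : C →ₗ[ℝ] V →ₗ[ℝ] V)
    (hJ1 : ∀ v : V, J e v = v)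
    (hJnorm : ∀ (ζ : C) (v : V), ‖J ζ v‖ = ‖ζ‖ * ‖v‖)
    (hJ2 : ∀ (v : V) (ζ η : C), ∃ ξ : C, J ζ (J η v) = J ξ v)
    (mul : C → C → C)
    (hmul : ∀ v : V, v ≠ 0 → ∀ ζ η : C, J (mul ζ η) v = J ζ (J η v)) :
    ∃ (n : ℕ) (g : PiLp 2 (fun _ : Fin n => C) ≃ₗᵢ[ℝ] V),
      ∀ (q : C) (x : PiLp 2 (fun _ : Fin n => C)),
        g (WithLp.toLp 2 (fun i => mul q (x i))) = J q (g x) := by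
  obtain ⟨n, v, hv, horth, hspan⟩ := CModule.exists_unit_orbits_iSup_eq hJ1 hJnorm hJ2 ⊤
    fun ζ => Module.End.invtSubmodule.top_mem _
  let g := (CModule.linearCombination J v).isometryOfInner
    (CModule.inner_linearCombination hJnorm hv horth)
  have hg : Surjective g :=
    LinearMap.range_eq_top.mp ((CModule.range_linearCombination J v).trans hspan)
  refine ⟨n, LinearIsometryEquiv.ofSurjective g hg, fun q x => ?_⟩
  have hv₀ (i : Fin n) : v i ≠ 0 := norm_ne_zero_iff.mp (by simp [hv])
  simp [g, CModule.linearCombination_apply, map_sum, hmul _ (hv₀ _)]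

theorem stmt10 {C V : Type*} [NormedAddCommGroup C] [InnerProductSpace ℝ C]
    [FiniteDimensional ℝ C] [NormedAddCommGroup V] [InnerProductSpace ℝ V]
    [FiniteDimensional ℝ V]
    (e : C) (he : ‖e‖ = 1) (J : C →ₗ[ℝ] V →ₗ[ℝ] V)
    (hJ1 : ∀ v : V, J e v = v)
    (hJnorm : ∀ (ζ : C) (v : V), ‖J ζ v‖ = ‖ζ‖ * ‖v‖)
    (hJ2 : ∀ (v : V) (ζ η : C), ∃ ξ : C, J ζ (J η v) = J ξ v)
    (hVnt : ∃ v : V, v ≠ 0)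
    (mul : C → C → C)
    (hmul : ∀ v : V, v ≠ 0 → ∀ ζ η : C, J (mul ζ η) v = J ζ (J η v)) :
    ∃ (n : ℕ) (g : PiLp 2 (fun _ : Fin n => C) ≃ₗᵢ[ℝ] V),
      ∀ (q : C) (x : PiLp 2 (fun _ : Fin n => C)),
        g (WithLp.toLp 2 (fun i => mul q (x i))) = J q (g x) :=
  stmt10_general e J hJ1 hJnorm hJ2 mul hmul
end

section
/- Let (C,V,J) be a J²C-module and W = C ⊕ V. Define a relation on W∖{0}: (0,u) ∼ (0,v) iff u ∈ Cv, and for ζ,η ≠ 0, (η,u) ∼ (ζ,v) iff η⁻¹u = ζ⁻¹v (where ζ⁻¹ = |ζ|⁻²ζ̄ acts via J). Then ∼ is an equivalence relation; transitivity in the first case uses the J²-condition. -/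
open scoped RealInnerProductSpace

private lemma key_inv {C V : Type*} [NormedAddCommGroup C] [InnerProductSpace ℝ C]
    [FiniteDimensional ℝ C] [NormedAddCommGroup V] [InnerProductSpace ℝ V]
    (e : C) (J : C →ₗ[ℝ] V →ₗ[ℝ] V)
    (hJ1 : ∀ v : V, J e v = v)
    (hJnorm : ∀ (ζ : C) (v : V), ‖J ζ v‖ = ‖ζ‖ * ‖v‖)
    (hJ2 : ∀ (v : V) (ζ η : C), ∃ ξ : C, J ζ (J η v) = J ξ v)
    {q : V} {ξ : C} (hne : J ξ q ≠ 0) : ∃ ξ' : C, J ξ' (J ξ q) = q := by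
  have hq : q ≠ 0 := by
    intro h
    apply hne
    rw [h]
    exact map_zero (J ξ)
  set L : C →ₗ[ℝ] V := J.flip q with hL
  set φ : C →ₗ[ℝ] V := J.flip (J ξ q) with hφ
  have hφinj : Function.Injective φ := by
    rw [← LinearMap.ker_eq_bot, LinearMap.ker_eq_bot']
    intro ζ h
    have h2 : ‖J ζ (J ξ q)‖ = ‖ζ‖ * ‖J ξ q‖ := hJnorm _ _
    rw [show J ζ (J ξ q) = φ ζ from rfl, h, norm_zero] at h2
    rcases mul_eq_zero.1 h2.symm with h3 | h3
    · exact norm_eq_zero.1 h3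
    · exact absurd (norm_eq_zero.1 h3) hne
  have hLinj : Function.Injective L := by
    rw [← LinearMap.ker_eq_bot, LinearMap.ker_eq_bot']
    intro ζ h
    have h2 : ‖J ζ q‖ = ‖ζ‖ * ‖q‖ := hJnorm _ _
    rw [show J ζ q = L ζ from rfl, h, norm_zero] at h2
    rcases mul_eq_zero.1 h2.symm with h3 | h3
    · exact norm_eq_zero.1 h3
    · exact absurd (norm_eq_zero.1 h3) hq
  have hle : LinearMap.range φ ≤ LinearMap.range L := by
    rintro _ ⟨ζ, rfl⟩
    obtain ⟨ξ', h⟩ := hJ2 q ζ ξ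
    exact ⟨ξ', h.symm⟩
  have heq : LinearMap.range φ = LinearMap.range L := by
    apply Submodule.eq_of_le_of_finrank_le hle
    rw [LinearMap.finrank_range_of_inj hφinj, LinearMap.finrank_range_of_inj hLinj]
  have hqmem : q ∈ LinearMap.range φ := by
    rw [heq]
    exact ⟨e, hJ1 q⟩
  obtain ⟨ξ', h⟩ := hqmem
  exact ⟨ξ', h⟩

theorem stmt12 {C V : Type*} [NormedAddCommGroup C] [InnerProductSpace ℝ C]
    [FiniteDimensional ℝ C] [NormedAddCommGroup V] [InnerProductSpace ℝ V]
    (e : C) (he : ‖e‖ = 1) (J : C →ₗ[ℝ] V →ₗ[ℝ] V)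
    (hJ1 : ∀ v : V, J e v = v)
    (hJnorm : ∀ (ζ : C) (v : V), ‖J ζ v‖ = ‖ζ‖ * ‖v‖)
    (hJ2 : ∀ (v : V) (ζ η : C), ∃ ξ : C, J ζ (J η v) = J ξ v)
    (r : C × V → C × V → Prop)
    (hr : ∀ p q : C × V, r p q ↔
      ((p.1 = 0 ∧ q.1 = 0 ∧ ∃ ξ : C, p.2 = J ξ q.2) ∨
       (p.1 ≠ 0 ∧ q.1 ≠ 0 ∧
         J ((‖p.1‖ ^ 2)⁻¹ • ((2 * ⟪p.1, e⟫) • e - p.1)) p.2 =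
           J ((‖q.1‖ ^ 2)⁻¹ • ((2 * ⟪q.1, e⟫) • e - q.1)) q.2))) :
    Equivalence (fun p q : {w : C × V // w ≠ 0} => r p.1 q.1) := by
  constructor
  · intro p
    rw [hr]
    by_cases h : p.1.1 = 0
    · exact Or.inl ⟨h, h, e, (hJ1 _).symm⟩
    · exact Or.inr ⟨h, h, rfl⟩
  · intro p q hpq
    rw [hr] at hpq ⊢
    rcases hpq with ⟨h1, h2, ξ, hξ⟩ | ⟨h1, h2, heq⟩
    · left
      refine ⟨h2, h1, ?_⟩
      have hp2 : p.1.2 ≠ 0 := by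
        intro h
        exact p.2 (Prod.ext h1 h)
      rw [hξ] at hp2
      obtain ⟨ξ', h⟩ := key_inv e J hJ1 hJnorm hJ2 hp2
      exact ⟨ξ', by rw [hξ, h]⟩
    · exact Or.inr ⟨h2, h1, heq.symm⟩
  · intro p q s hpq hqs
    rw [hr] at hpq hqs ⊢
    rcases hpq with ⟨h1, h2, ξ, hξ⟩ | ⟨h1, h2, heq⟩
    · rcases hqs with ⟨h3, h4, η, hη⟩ | ⟨h3, h4, heq'⟩
      · left
        refine ⟨h1, h4, ?_⟩
        obtain ⟨ζ, hζ⟩ := hJ2 s.1.2 ξ η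
        exact ⟨ζ, by rw [hξ, hη, hζ]⟩
      · exact absurd h2 h3
    · rcases hqs with ⟨h3, h4, η, hη⟩ | ⟨h3, h4, heq'⟩
      · exact absurd h3 h2
      · exact Or.inr ⟨h1, h4, heq.trans heq'⟩
end

section
/- Let (C,V,J) be a J²C-module and W = C ⊕ V. Every linear C-subspace E of W (an ℝ-linear subspace containing Cw for each nonzero w ∈ E) has an orthogonal complement in W which is again a linear C-subspace, and E is an orthogonal direct sum of C-lines through 0. -/
/-!
The key fact is that a vector orthogonal to a `C`-line `Cx` has its whole `C`-line orthogonal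
to `Cx`. Writing the two lines as `{(a ζ, J ζ u)}` and `{(b η, J η t)}`, this says that
`a b ⟪ζ, η⟫ + ⟪J ζ u, J η t⟫` vanishes for all `ζ` once it vanishes for one `ζ₀ ≠ 0`.
Replacing `u` by `u + (a b / ‖t‖²) t` removes the first term, and
`J ζ₀ u ⊥ J(C) t ⇒ J(C) u ⊥ J(C) t` holds because the adjoint of `J ζ` is
`J (2⟪ζ, e⟫ e - ζ)` and `J(C) J(C) t ⊆ J(C) t`. Orthogonality of lines gives at once that
`Eᗮ` is a `C`-subspace, and that `E` splits as the span of one of its lines plus the orthogonal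
complement of that span in `E`, again a `C`-subspace, of smaller dimension.
-/

open scoped RealInnerProductSpace

section OrthogonalLines

variable {X : Type*} [NormedAddCommGroup X] [InnerProductSpace ℝ X] {R : X → X → Prop}

theorem mem_orthogonal_span_of_rel
    (hR : ∀ w x, (∀ p, R p x → ⟪w, p⟫ = 0) → ∀ q p, R q w → R p x → ⟪q, p⟫ = 0)
    {x w q : X} (hw : w ∈ (Submodule.span ℝ {p | R p x})ᗮ) (hq : R q w) :
    q ∈ (Submodule.span ℝ {p | R p x})ᗮ := by
  have hw' : ∀ p, R p x → ⟪w, p⟫ = 0 := fun p hp =>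
    (Submodule.mem_orthogonal' _ w).1 hw p (Submodule.subset_span hp)
  refine Submodule.isOrtho_span.2 ?_ (Submodule.mem_span_singleton_self q)
  rintro u rfl p hp
  exact hR w x hw' u p hq hp

theorem exists_pairwise_orthogonal_lines [FiniteDimensional ℝ X] (hrefl : ∀ x, R x x)
    (hR : ∀ w x, (∀ p, R p x → ⟪w, p⟫ = 0) → ∀ q p, R q w → R p x → ⟪q, p⟫ = 0)
    (E : Submodule ℝ X) (hE : ∀ w ∈ E, ∀ q, R q w → q ∈ E) :
    ∃ (n : ℕ) (w : Fin n → X), (∀ i, w i ≠ 0 ∧ w i ∈ E) ∧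
      Pairwise (fun i j => ∀ p q, R p (w i) → R q (w j) → ⟪p, q⟫ = 0) ∧
      E = Submodule.span ℝ (⋃ i, {p | R p (w i)}) := by
  induction hd : Module.finrank ℝ E using Nat.strong_induction_on generalizing E with
  | _ d ih =>
    obtain rfl | hE0 := eq_or_ne E ⊥
    · exact ⟨0, Fin.elim0, finZeroElim, fun i => i.elim0, by simp⟩
    obtain ⟨w₀, hw₀E, hw₀⟩ := Submodule.exists_mem_ne_zero_of_ne_bot hE0
    set L := Submodule.span ℝ {p | R p w₀}
    have hLE : L ≤ E := Submodule.span_le.2 fun p hp => hE w₀ hw₀E p hp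
    have hL : 0 < Module.finrank ℝ L :=
      Module.finrank_pos_iff_exists_ne_zero.2 ⟨⟨w₀, Submodule.subset_span (hrefl w₀)⟩, by simpa⟩
    have hF : ∀ w ∈ Lᗮ ⊓ E, ∀ q, R q w → q ∈ Lᗮ ⊓ E := fun w hw q hq =>
      ⟨mem_orthogonal_span_of_rel hR hw.1 hq, hE w hw.2 q hq⟩
    have hdim := Submodule.finrank_add_inf_finrank_orthogonal hLE
    obtain ⟨n, w, hwF, hw, hspan⟩ := ih _ (by omega) (Lᗮ ⊓ E) hF rfl
    have hwL : ∀ i, ∀ p, R p w₀ → ⟪w i, p⟫ = 0 := fun i p hp =>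
      (Submodule.mem_orthogonal' L _).1 (hwF i).2.1 p (Submodule.subset_span hp)
    refine ⟨n + 1, Fin.cons w₀ w,
      Fin.forall_fin_succ.2 ⟨⟨hw₀, hw₀E⟩, fun i => ⟨(hwF i).1, (hwF i).2.2⟩⟩,
      pairwise_fin_succ_iff.2 ⟨fun i p q hp hq => hR _ _ (hwL i) p q hp hq,
        fun j p q hp hq => (real_inner_comm _ _).trans (hR _ _ (hwL j) q p hq hp), hw⟩, ?_⟩
    have hunion : (⋃ i, {p | R p ((Fin.cons w₀ w : Fin (n + 1) → X) i)}) =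
        {p | R p w₀} ∪ ⋃ i, {p | R p (w i)} := by
      ext p; simp [Fin.exists_fin_succ]
    rw [hunion, Submodule.span_union, ← hspan,
      Submodule.sup_orthogonal_inf_of_hasOrthogonalProjection hLE]

end OrthogonalLines

section J2CModule

variable {C V : Type*} [NormedAddCommGroup C] [InnerProductSpace ℝ C]
  [NormedAddCommGroup V] [InnerProductSpace ℝ V] {J : C →ₗ[ℝ] V →ₗ[ℝ] V}

structure IsJ2CModule (e : C) (J : C →ₗ[ℝ] V →ₗ[ℝ] V) : Prop where
  norm_e : ‖e‖ = 1
  apply_e : ∀ v, J e v = v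
  norm_apply : ∀ ζ v, ‖J ζ v‖ = ‖ζ‖ * ‖v‖
  exists_apply_apply : ∀ v ζ η, ∃ ξ, J ζ (J η v) = J ξ v

/-- The inverse `ζ̄ / ‖ζ‖²` of `ζ`, where `ζ̄ = 2⟪ζ, e⟫ e - ζ` is the reflection of `ζ` in `ℝ e`. -/
noncomputable def cInv (e ζ : C) : C := (‖ζ‖ ^ 2)⁻¹ • ((2 * ⟪ζ, e⟫) • e - ζ)

/-- `p` lies on the `C`-line `Cw`; the point `0` counts only when `w.1 = 0`. -/
def MemCLine (e : C) (J : C →ₗ[ℝ] V →ₗ[ℝ] V) (p w : C × V) : Prop :=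
  (p.1 = 0 ∧ w.1 = 0 ∧ ∃ ξ : C, p.2 = J ξ w.2) ∨
    (p.1 ≠ 0 ∧ w.1 ≠ 0 ∧ J (cInv e p.1) p.2 = J (cInv e w.1) w.2)

theorem inner_map_map_eq_norm_sq_mul (hJ : ∀ ζ v, ‖J ζ v‖ = ‖ζ‖ * ‖v‖) (ζ : C) (v w : V) :
    ⟪J ζ v, J ζ w⟫ = ‖ζ‖ ^ 2 * ⟪v, w⟫ := by
  have hsq : ∀ u, ⟪J ζ u, J ζ u⟫ = ‖ζ‖ ^ 2 * ⟪u, u⟫ := fun u => by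
    rw [real_inner_self_eq_norm_sq, real_inner_self_eq_norm_sq, hJ]; ring
  have h := hsq (v + w)
  rw [map_add, real_inner_add_add_self, real_inner_add_add_self, hsq v, hsq w] at h
  linarith

theorem inner_map_map_add_inner_map_map (hJ : ∀ ζ v, ‖J ζ v‖ = ‖ζ‖ * ‖v‖) (ζ η : C) (v w : V) :
    ⟪J ζ v, J η w⟫ + ⟪J η v, J ζ w⟫ = 2 * ⟪ζ, η⟫ * ⟪v, w⟫ := by
  have h := inner_map_map_eq_norm_sq_mul hJ (ζ + η) v w
  simp only [map_add, LinearMap.add_apply, inner_add_left, inner_add_right,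
    inner_map_map_eq_norm_sq_mul hJ, norm_add_sq_real] at h
  linarith

theorem inner_map_map_eq_inner_mul_norm_sq (hJ : ∀ ζ v, ‖J ζ v‖ = ‖ζ‖ * ‖v‖) (ζ η : C) (u : V) :
    ⟪J ζ u, J η u⟫ = ⟪ζ, η⟫ * ‖u‖ ^ 2 := by
  have h := inner_map_map_add_inner_map_map hJ ζ η u u
  rw [real_inner_comm (J ζ u) (J η u), real_inner_self_eq_norm_sq] at h
  linarith

theorem inner_map_add_inner_map {e : C} (hJe : ∀ v, J e v = v)
    (hJ : ∀ ζ v, ‖J ζ v‖ = ‖ζ‖ * ‖v‖) (ζ : C) (v w : V) :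
    ⟪J ζ v, w⟫ + ⟪v, J ζ w⟫ = 2 * ⟪ζ, e⟫ * ⟪v, w⟫ := by
  simpa only [hJe] using inner_map_map_add_inner_map_map hJ ζ e v w

theorem map_conj_map {e : C} (hJe : ∀ v, J e v = v) (hJ : ∀ ζ v, ‖J ζ v‖ = ‖ζ‖ * ‖v‖)
    (ζ : C) (v : V) : J ((2 * ⟪ζ, e⟫) • e - ζ) (J ζ v) = ‖ζ‖ ^ 2 • v := by
  refine ext_inner_left ℝ fun w => ?_
  have h := inner_map_add_inner_map hJe hJ ζ w (J ζ v)
  rw [inner_map_map_eq_norm_sq_mul hJ] at h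
  simp only [map_sub, map_smul, LinearMap.sub_apply, LinearMap.smul_apply, hJe, inner_sub_right,
    real_inner_smul_right]
  linarith

theorem conj_eq_reflection {e : C} (he : ‖e‖ = 1) (ζ : C) :
    (2 * ⟪ζ, e⟫) • e - ζ = (ℝ ∙ e).reflection ζ := by
  rw [Submodule.reflection_apply, Submodule.starProjection_unit_singleton ℝ he, real_inner_comm,
    two_smul, two_mul, add_smul]

theorem map_map_conj {e : C} (he : ‖e‖ = 1) (hJe : ∀ v, J e v = v)
    (hJ : ∀ ζ v, ‖J ζ v‖ = ‖ζ‖ * ‖v‖) (ζ : C) (v : V) :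
    J ζ (J ((2 * ⟪ζ, e⟫) • e - ζ) v) = ‖ζ‖ ^ 2 • v := by
  have h := map_conj_map hJe hJ ((ℝ ∙ e).reflection ζ) v
  rwa [conj_eq_reflection he, Submodule.reflection_reflection, LinearIsometryEquiv.norm_map,
    ← conj_eq_reflection he] at h

theorem memCLine_self {e : C} (hJe : ∀ v, J e v = v) (x : C × V) : MemCLine e J x x := by
  by_cases hx : x.1 = 0
  · exact Or.inl ⟨hx, hx, e, (hJe x.2).symm⟩
  · exact Or.inr ⟨hx, hx, rfl⟩

namespace IsJ2CModule

variable {e : C}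

theorem map_cInv_map (hJ : IsJ2CModule e J) {ζ : C} (hζ : ζ ≠ 0) (v : V) :
    J (cInv e ζ) (J ζ v) = v := by
  rw [cInv, map_smul, LinearMap.smul_apply, map_conj_map hJ.apply_e hJ.norm_apply, smul_smul,
    inv_mul_cancel₀ (by positivity), one_smul]

theorem map_map_cInv (hJ : IsJ2CModule e J) {ζ : C} (hζ : ζ ≠ 0) (v : V) :
    J ζ (J (cInv e ζ) v) = v := by
  rw [cInv, map_smul, LinearMap.smul_apply, map_smul,
    map_map_conj hJ.norm_e hJ.apply_e hJ.norm_apply, smul_smul, inv_mul_cancel₀ (by positivity),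
    one_smul]

theorem inner_map_map_eq_zero (hJ : IsJ2CModule e J) {u t : V} (h : ∀ η, ⟪u, J η t⟫ = 0)
    (ζ η : C) : ⟪J ζ u, J η t⟫ = 0 := by
  have h' := inner_map_add_inner_map hJ.apply_e hJ.norm_apply ζ u (J η t)
  obtain ⟨ξ, hξ⟩ := hJ.exists_apply_apply t ζ η
  rw [hξ, h ξ, h η] at h'
  linarith

theorem inner_map_map_eq_zero_of_map (hJ : IsJ2CModule e J) {ζ₀ : C} (hζ₀ : ζ₀ ≠ 0) {u t : V}
    (h : ∀ η, ⟪J ζ₀ u, J η t⟫ = 0) (ζ η : C) : ⟪J ζ u, J η t⟫ = 0 := by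
  refine hJ.inner_map_map_eq_zero (fun η => ?_) ζ η
  simpa only [hJ.map_cInv_map hζ₀] using hJ.inner_map_map_eq_zero h (cInv e ζ₀) η

theorem mul_inner_add_inner_map_map_eq_zero (hJ : IsJ2CModule e J) {c : ℝ} {ζ₀ : C}
    (hζ₀ : ζ₀ ≠ 0) {u t : V} (h : ∀ η, c * ⟪ζ₀, η⟫ + ⟪J ζ₀ u, J η t⟫ = 0) (ζ η : C) :
    c * ⟪ζ, η⟫ + ⟪J ζ u, J η t⟫ = 0 := by
  obtain rfl | ht := eq_or_ne t 0
  · have hc : c = 0 := by simpa [hζ₀] using h ζ₀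
    simp [hc]
  have shift : ∀ ζ η, ⟪J ζ (u + (c / ‖t‖ ^ 2) • t), J η t⟫ = c * ⟪ζ, η⟫ + ⟪J ζ u, J η t⟫ := by
    intro ζ η
    rw [map_add, inner_add_left, map_smul, real_inner_smul_left,
      inner_map_map_eq_inner_mul_norm_sq hJ.norm_apply]
    field_simp
    ring
  rw [← shift]
  exact hJ.inner_map_map_eq_zero_of_map hζ₀ (fun η => (shift ζ₀ η).trans (h η)) ζ η

theorem exists_cLine_parametrization (hJ : IsJ2CModule e J) (x : C × V) :
    ∃ (b : ℝ) (t : V) (η₀ : C), η₀ ≠ 0 ∧ x = (b • η₀, J η₀ t) ∧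
      (∀ p, MemCLine e J p x → ∃ η, p = (b • η, J η t)) ∧
      ∀ η, η ≠ 0 → MemCLine e J (b • η, J η t) x := by
  have he : e ≠ 0 := norm_ne_zero_iff.1 (by simp [hJ.norm_e])
  by_cases hx : x.1 = 0
  · refine ⟨0, x.2, e, he, by simp [← hx, hJ.apply_e], fun p hp => ?_,
      fun η _ => Or.inl ⟨zero_smul ℝ η, hx, η, rfl⟩⟩
    obtain ⟨hp1, -, ξ, hp2⟩ | ⟨-, hx', -⟩ := hp
    · exact ⟨ξ, Prod.ext (by simp [hp1]) hp2⟩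
    · exact absurd hx hx'
  · refine ⟨1, J (cInv e x.1) x.2, x.1, hx, by simp [hJ.map_map_cInv hx], fun p hp => ?_,
      fun η hη => Or.inr ⟨by simpa using hη, hx, by simp [hJ.map_cInv_map hη]⟩⟩
    obtain ⟨-, hx', -⟩ | ⟨hp1, -, hp2⟩ := hp
    · exact absurd hx' hx
    · exact ⟨p.1, Prod.ext (by simp) (by rw [← hp2, hJ.map_map_cInv hp1])⟩

theorem inner_eq_zero_of_memCLine (hJ : IsJ2CModule e J) {w x : C × V}
    (H : ∀ p, MemCLine e J p x → ⟪w.1, p.1⟫ + ⟪w.2, p.2⟫ = 0) {q p : C × V}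
    (hq : MemCLine e J q w) (hp : MemCLine e J p x) : ⟪q.1, p.1⟫ + ⟪q.2, p.2⟫ = 0 := by
  obtain ⟨a, u, ζ₀, hζ₀, rfl, hw_param, -⟩ := hJ.exists_cLine_parametrization w
  obtain ⟨b, t, -, -, -, hx_param, hx_mem⟩ := hJ.exists_cLine_parametrization x
  have hw_perp : ∀ η, b * a * ⟪ζ₀, η⟫ + ⟪J ζ₀ u, J η t⟫ = 0 := by
    intro η
    obtain rfl | hη := eq_or_ne η 0
    · simp
    simpa [real_inner_smul_left, real_inner_smul_right, mul_assoc] using H _ (hx_mem η hη)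
  obtain ⟨ζ, rfl⟩ := hw_param q hq
  obtain ⟨η, rfl⟩ := hx_param p hp
  simpa [real_inner_smul_left, real_inner_smul_right, mul_assoc] using
    hJ.mul_inner_add_inner_map_map_eq_zero hζ₀ hw_perp ζ η

theorem exists_pairwise_orthogonal_cLines [FiniteDimensional ℝ C]
    [FiniteDimensional ℝ V] (hJ : IsJ2CModule e J) (E : Submodule ℝ (C × V))
    (hE : ∀ w ∈ E, ∀ q, MemCLine e J q w → q ∈ E) :
    ∃ (n : ℕ) (w : Fin n → C × V), (∀ i, w i ≠ 0 ∧ w i ∈ E) ∧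
      (∀ i j, i ≠ j → ∀ p q : C × V, MemCLine e J p (w i) → MemCLine e J q (w j) →
        ⟪p.1, q.1⟫ + ⟪p.2, q.2⟫ = 0) ∧
      E = Submodule.span ℝ (⋃ i, {p : C × V | MemCLine e J p (w i)}) := by
  -- `⟪p.1, q.1⟫ + ⟪p.2, q.2⟫` is the inner product of `WithLp 2 (C × V)`
  let T := WithLp.linearEquiv 2 ℝ (C × V)
  obtain ⟨n, w, hwE, hw, hspan⟩ := exists_pairwise_orthogonal_lines
    (R := fun x y => MemCLine e J (T x) (T y)) (fun x => memCLine_self hJ.apply_e (T x))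
    (fun w x H q p hq hp => hJ.inner_eq_zero_of_memCLine (fun p hp => H (T.symm p) hp) hq hp)
    (E.comap T.toLinearMap) (fun w hw q hq => hE (T w) hw (T q) hq)
  refine ⟨n, T ∘ w, fun i => ⟨by simpa using (hwE i).1, (hwE i).2⟩,
    fun i j hij p q hp hq => hw hij (T.symm p) (T.symm q) hp hq, ?_⟩
  have := congrArg (Submodule.map T.toLinearMap) hspan
  rw [Submodule.map_comap_eq_of_surjective T.surjective, Submodule.map_span,
    Set.image_iUnion] at this
  simpa only [LinearEquiv.coe_coe, LinearEquiv.image_eq_preimage_symm, Set.preimage_ofPred_eq,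
    LinearEquiv.apply_symm_apply, Function.comp_apply] using this

end IsJ2CModule

end J2CModule

theorem stmt15 {C V : Type*} [NormedAddCommGroup C] [InnerProductSpace ℝ C]
    [FiniteDimensional ℝ C] [NormedAddCommGroup V] [InnerProductSpace ℝ V]
    [FiniteDimensional ℝ V]
    (e : C) (he : ‖e‖ = 1) (J : C →ₗ[ℝ] V →ₗ[ℝ] V)
    (hJ1 : ∀ v : V, J e v = v)
    (hJnorm : ∀ (ζ : C) (v : V), ‖J ζ v‖ = ‖ζ‖ * ‖v‖)
    (hJ2 : ∀ (v : V) (ζ η : C), ∃ ξ : C, J ζ (J η v) = J ξ v)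
    (r : C × V → C × V → Prop)
    (hr : ∀ p q : C × V, r p q ↔
      ((p.1 = 0 ∧ q.1 = 0 ∧ ∃ ξ : C, p.2 = J ξ q.2) ∨
       (p.1 ≠ 0 ∧ q.1 ≠ 0 ∧
         J ((‖p.1‖ ^ 2)⁻¹ • ((2 * ⟪p.1, e⟫) • e - p.1)) p.2 =
           J ((‖q.1‖ ^ 2)⁻¹ • ((2 * ⟪q.1, e⟫) • e - q.1)) q.2)))
    (E : Submodule ℝ (C × V))
    (hE : ∀ w ∈ E, ∀ q : C × V, r q w → q ∈ E) :
    (∀ F : Submodule ℝ (C × V),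
      (∀ p : C × V, p ∈ F ↔ ∀ q ∈ E, ⟪p.1, q.1⟫ + ⟪p.2, q.2⟫ = 0) →
      ∀ w ∈ F, ∀ q : C × V, r q w → q ∈ F) ∧
    (∃ (n : ℕ) (w : Fin n → C × V),
      (∀ i, w i ≠ 0 ∧ w i ∈ E) ∧
      (∀ i j, i ≠ j → ∀ p q : C × V, r p (w i) → r q (w j) →
        ⟪p.1, q.1⟫ + ⟪p.2, q.2⟫ = 0) ∧
      E = Submodule.span ℝ (⋃ i, {p : C × V | r p (w i)})) := by
  obtain rfl : r = MemCLine e J := funext₂ fun p q => propext (hr p q)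
  have hJ : IsJ2CModule e J := ⟨he, hJ1, hJnorm, hJ2⟩
  refine ⟨fun F hF w hw q hq => (hF q).2 fun x hx => ?_, hJ.exists_pairwise_orthogonal_cLines E hE⟩
  exact hJ.inner_eq_zero_of_memCLine (fun p hp => (hF w).1 hw p (hE x hx p hp)) hq
    (memCLine_self hJ1 x)
end

section
/- Let (C,V,J) be a J²C-module with V ≠ 0, W = C ⊕ V, and let g : W → W be a homeomorphism fixing 0 that maps every affine C-line onto an affine C-line and maps parallel C-lines to parallel C-lines. Then g is ℝ-linear. -/
open scoped RealInnerProductSpace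

section aux8341
variable {C V : Type*} [NormedAddCommGroup C] [InnerProductSpace ℝ C]
    [NormedAddCommGroup V] [InnerProductSpace ℝ V]

lemma aux8341_polar (e : C) (J : C →ₗ[ℝ] V →ₗ[ℝ] V)
    (hJnorm : ∀ (ζ : C) (v : V), ‖J ζ v‖ = ‖ζ‖ * ‖v‖)
    (ζ η : C) (v : V) : ⟪J ζ v, J η v⟫ = ⟪ζ, η⟫ * ‖v‖ ^ 2 := by
  have h2 : ‖J ζ v‖ ^ 2 = ‖ζ‖ ^ 2 * ‖v‖ ^ 2 := by rw [hJnorm]; ring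
  have h3 : ‖J η v‖ ^ 2 = ‖η‖ ^ 2 * ‖v‖ ^ 2 := by rw [hJnorm]; ring
  have e1 : J (ζ + η) v = J ζ v + J η v := by rw [map_add]; rfl
  have k1 : ‖J ζ v + J η v‖ ^ 2 = ‖ζ + η‖ ^ 2 * ‖v‖ ^ 2 := by
    rw [← e1, hJnorm]; ring
  rw [norm_add_sq_real, norm_add_sq_real] at k1
  nlinarith [k1, h2, h3]

lemma aux8341_skew (e : C) (he : ‖e‖ = 1) (J : C →ₗ[ℝ] V →ₗ[ℝ] V)
    (hJ1 : ∀ v : V, J e v = v)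
    (hJnorm : ∀ (ζ : C) (v : V), ‖J ζ v‖ = ‖ζ‖ * ‖v‖)
    (ζ : C) (a b : V) : ⟪J ζ a, b⟫ + ⟪J ζ b, a⟫ = 2 * ⟪ζ, e⟫ * ⟪a, b⟫ := by
  have h := aux8341_polar e J hJnorm ζ e (a + b)
  rw [hJ1] at h
  have e1 : J ζ (a + b) = J ζ a + J ζ b := map_add _ _ _
  rw [e1, norm_add_sq_real] at h
  have ha := aux8341_polar e J hJnorm ζ e a
  have hb := aux8341_polar e J hJnorm ζ e b
  rw [hJ1] at ha hb
  rw [inner_add_left, inner_add_right, inner_add_right] at h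
  have hc : ⟪J ζ b, a⟫ = ⟪a, J ζ b⟫ := real_inner_comm _ _
  nlinarith [h, ha, hb, hc]

lemma aux8341_sq (e : C) (he : ‖e‖ = 1) (J : C →ₗ[ℝ] V →ₗ[ℝ] V)
    (hJ1 : ∀ v : V, J e v = v)
    (hJnorm : ∀ (ζ : C) (v : V), ‖J ζ v‖ = ‖ζ‖ * ‖v‖)
    (hJ2 : ∀ (v : V) (ζ η : C), ∃ ξ : C, J ζ (J η v) = J ξ v)
    (ζ : C) (hζ : ⟪ζ, e⟫ = 0) (v : V) : J ζ (J ζ v) = (-(‖ζ‖ ^ 2)) • v := by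
  rcases eq_or_ne v 0 with rfl | hv
  · simp
  obtain ⟨ξ, hξ⟩ := hJ2 v ζ ζ
  have hnv : ‖v‖ ≠ 0 := norm_ne_zero_iff.mpr hv
  have hnv2 : (‖v‖ : ℝ) ^ 2 ≠ 0 := pow_ne_zero _ hnv
  have hnξ : ‖ξ‖ = ‖ζ‖ ^ 2 := by
    have h1 : ‖J ζ (J ζ v)‖ = ‖ζ‖ * (‖ζ‖ * ‖v‖) := by rw [hJnorm, hJnorm]
    rw [hξ, hJnorm] at h1
    exact mul_right_cancel₀ hnv (h1.trans (by ring))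
  have hA : ⟪J ξ v, v⟫ = ⟪ξ, e⟫ * ‖v‖ ^ 2 := by
    have := aux8341_polar e J hJnorm ξ e v; rwa [hJ1] at this
  have hB : ⟪J ζ (J ζ v), v⟫ + ⟪J ζ v, J ζ v⟫ = 2 * ⟪ζ, e⟫ * ⟪J ζ v, v⟫ := by
    have := aux8341_skew e he J hJ1 hJnorm ζ (J ζ v) v
    simpa [real_inner_comm] using this
  have hC : ⟪J ζ v, J ζ v⟫ = ‖ζ‖ ^ 2 * ‖v‖ ^ 2 := by
    rw [real_inner_self_eq_norm_sq, hJnorm]; ring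
  have hinner : ⟪ξ, e⟫ = -(‖ζ‖ ^ 2) := by
    rw [hξ] at hB
    have key : (⟪ξ, e⟫ + ‖ζ‖ ^ 2) * ‖v‖ ^ 2 = 0 := by
      rw [hζ] at hB; linear_combination hB - hA - hC
    rcases mul_eq_zero.mp key with h | h
    · linarith
    · exact absurd h hnv2
  have hξe : ξ = (-(‖ζ‖ ^ 2)) • e := by
    have hz : ‖ξ - (-(‖ζ‖ ^ 2)) • e‖ ^ 2 = 0 := by
      rw [norm_sub_sq_real, real_inner_smul_right, norm_smul, he, hinner, hnξ,
        Real.norm_eq_abs, abs_neg, abs_of_nonneg (sq_nonneg _)]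
      ring
    have h0 : ξ - (-(‖ζ‖ ^ 2)) • e = 0 :=
      norm_eq_zero.mp (pow_eq_zero_iff (two_ne_zero) |>.mp hz)
    exact sub_eq_zero.mp h0
  rw [hξ, hξe, map_smul]
  simp [LinearMap.smul_apply, hJ1]


lemma aux8341_conj0 (e : C) (he : ‖e‖ = 1) (J : C →ₗ[ℝ] V →ₗ[ℝ] V)
    (hJ1 : ∀ v : V, J e v = v)
    (hJnorm : ∀ (ζ : C) (v : V), ‖J ζ v‖ = ‖ζ‖ * ‖v‖)
    (hJ2 : ∀ (v : V) (ζ η : C), ∃ ξ : C, J ζ (J η v) = J ξ v)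
    (aR : ℝ) (ζ' : C) (hζ'e : ⟪ζ', e⟫ = 0) (v : V) :
    J (aR • e - ζ') (J (aR • e + ζ') v) = (aR ^ 2 + ‖ζ'‖ ^ 2) • v ∧
      J (aR • e + ζ') (J (aR • e - ζ') v) = (aR ^ 2 + ‖ζ'‖ ^ 2) • v := by
  have hsq := aux8341_sq e he J hJ1 hJnorm hJ2 ζ' hζ'e
  have hae : ∀ w : V, J (aR • e) w = aR • w := fun w => by
    rw [map_smul, LinearMap.smul_apply, hJ1]
  constructor
  · have h1 : J (aR • e + ζ') v = aR • v + J ζ' v := by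
      rw [map_add, LinearMap.add_apply, hae]
    rw [h1, map_sub, LinearMap.sub_apply, hae, map_add (J ζ'), map_smul (J ζ'), hsq]
    module
  · have h1 : J (aR • e - ζ') v = aR • v - J ζ' v := by
      rw [map_sub, LinearMap.sub_apply, hae]
    rw [h1, map_add, LinearMap.add_apply, hae, map_sub (J ζ'), map_smul (J ζ'), hsq]
    module

lemma aux8341_conj (e : C) (he : ‖e‖ = 1) (J : C →ₗ[ℝ] V →ₗ[ℝ] V)
    (hJ1 : ∀ v : V, J e v = v)
    (hJnorm : ∀ (ζ : C) (v : V), ‖J ζ v‖ = ‖ζ‖ * ‖v‖)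
    (hJ2 : ∀ (v : V) (ζ η : C), ∃ ξ : C, J ζ (J η v) = J ξ v)
    (ζ : C) (v : V) :
    J ((2 * ⟪ζ, e⟫) • e - ζ) (J ζ v) = (‖ζ‖ ^ 2) • v ∧
      J ζ (J ((2 * ⟪ζ, e⟫) • e - ζ) v) = (‖ζ‖ ^ 2) • v := by
  have h0 : ⟪ζ - (⟪ζ, e⟫ : ℝ) • e, e⟫ = 0 := by
    rw [inner_sub_left, real_inner_smul_left, real_inner_self_eq_norm_sq, he]
    ring
  obtain ⟨c1, c2⟩ := aux8341_conj0 e he J hJ1 hJnorm hJ2 ⟪ζ, e⟫ (ζ - (⟪ζ, e⟫ : ℝ) • e) h0 v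
  have e1 : (⟪ζ, e⟫ : ℝ) • e + (ζ - (⟪ζ, e⟫ : ℝ) • e) = ζ := by abel
  have e2 : (⟪ζ, e⟫ : ℝ) • e - (ζ - (⟪ζ, e⟫ : ℝ) • e) = (2 * ⟪ζ, e⟫) • e - ζ := by
    rw [two_mul, add_smul]; abel
  have h3 : (⟪ζ, e⟫ : ℝ) ^ 2 + ‖ζ - (⟪ζ, e⟫ : ℝ) • e‖ ^ 2 = ‖ζ‖ ^ 2 := by
    rw [norm_sub_sq_real, real_inner_smul_right, norm_smul, Real.norm_eq_abs, he,
      mul_one, sq_abs]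
    ring
  rw [e1, e2, h3] at c1 c2
  exact ⟨c1, c2⟩

lemma aux8341_inv (e : C) (he : ‖e‖ = 1) (J : C →ₗ[ℝ] V →ₗ[ℝ] V)
    (hJ1 : ∀ v : V, J e v = v)
    (hJnorm : ∀ (ζ : C) (v : V), ‖J ζ v‖ = ‖ζ‖ * ‖v‖)
    (hJ2 : ∀ (v : V) (ζ η : C), ∃ ξ : C, J ζ (J η v) = J ξ v)
    (ζ : C) (hζ : ζ ≠ 0) (v : V) :
    J ((‖ζ‖ ^ 2)⁻¹ • ((2 * ⟪ζ, e⟫) • e - ζ)) (J ζ v) = v ∧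
      J ζ (J ((‖ζ‖ ^ 2)⁻¹ • ((2 * ⟪ζ, e⟫) • e - ζ)) v) = v := by
  have hn : (‖ζ‖ : ℝ) ^ 2 ≠ 0 := pow_ne_zero _ (norm_ne_zero_iff.mpr hζ)
  obtain ⟨h1, h2⟩ := aux8341_conj e he J hJ1 hJnorm hJ2 ζ v
  constructor
  · rw [map_smul, LinearMap.smul_apply, h1, smul_smul, inv_mul_cancel₀ hn, one_smul]
  · rw [map_smul, LinearMap.smul_apply, map_smul, h2, smul_smul, inv_mul_cancel₀ hn, one_smul]


end aux8341

theorem stmt16 {C V : Type*} [NormedAddCommGroup C] [InnerProductSpace ℝ C]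
    [FiniteDimensional ℝ C] [NormedAddCommGroup V] [InnerProductSpace ℝ V]
    [FiniteDimensional ℝ V] [Nontrivial V]
    (e : C) (he : ‖e‖ = 1) (J : C →ₗ[ℝ] V →ₗ[ℝ] V)
    (hJ1 : ∀ v : V, J e v = v)
    (hJnorm : ∀ (ζ : C) (v : V), ‖J ζ v‖ = ‖ζ‖ * ‖v‖)
    (hJ2 : ∀ (v : V) (ζ η : C), ∃ ξ : C, J ζ (J η v) = J ξ v)
    (r : C × V → C × V → Prop)
    (hr : ∀ p q : C × V, r p q ↔
      ((p.1 = 0 ∧ q.1 = 0 ∧ ∃ ξ : C, p.2 = J ξ q.2) ∨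
       (p.1 ≠ 0 ∧ q.1 ≠ 0 ∧
         J ((‖p.1‖ ^ 2)⁻¹ • ((2 * ⟪p.1, e⟫) • e - p.1)) p.2 =
           J ((‖q.1‖ ^ 2)⁻¹ • ((2 * ⟪q.1, e⟫) • e - q.1)) q.2)))
    (g : (C × V) ≃ₜ (C × V)) (hg0 : g 0 = 0)
    (hglines : ∀ w : C × V, w ≠ 0 → ∃ w' : C × V, w' ≠ 0 ∧
      ∀ w₀ : C × V, ∃ w₀' : C × V,
        ⇑g '' ((w₀ + ·) '' insert (0 : C × V) {p | r p w}) =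
          (w₀' + ·) '' insert (0 : C × V) {p | r p w'}) :
    IsLinearMap ℝ ⇑g := by
  classical
  have hinvL : ∀ (ζ : C), ζ ≠ 0 → ∀ v : V,
      J ((‖ζ‖ ^ 2)⁻¹ • ((2 * ⟪ζ, e⟫) • e - ζ)) (J ζ v) = v :=
    fun ζ h v => (aux8341_inv e he J hJ1 hJnorm hJ2 ζ h v).1
  have hinvR : ∀ (ζ : C), ζ ≠ 0 → ∀ v : V,
      J ζ (J ((‖ζ‖ ^ 2)⁻¹ • ((2 * ⟪ζ, e⟫) • e - ζ)) v) = v :=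
    fun ζ h v => (aux8341_inv e he J hJ1 hJnorm hJ2 ζ h v).2
  -- characterization of lines
  have hL1 : ∀ w : C × V, w.1 ≠ 0 →
      insert (0 : C × V) {p | r p w} =
        {q : C × V | q.2 = J q.1 (J ((‖w.1‖ ^ 2)⁻¹ • ((2 * ⟪w.1, e⟫) • e - w.1)) w.2)} := by
    intro w hw
    ext q
    simp only [Set.mem_insert_iff, Set.mem_setOf_eq, hr]
    constructor
    · rintro (rfl | ⟨h1, h2, _⟩ | ⟨h1, h2, hx⟩)
      · simp
      · exact absurd h2 hw
      · rw [← hx]; exact (hinvR q.1 h1 q.2).symm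
    · intro hq
      by_cases h1 : q.1 = 0
      · left
        have h2 : q.2 = 0 := by rw [hq, h1]; simp
        exact Prod.ext_iff.mpr ⟨h1, h2⟩
      · right; right
        exact ⟨h1, hw, by rw [hq, hinvL q.1 h1]⟩
  have hL2 : ∀ w : C × V, w.1 = 0 →
      insert (0 : C × V) {p | r p w} = {q : C × V | q.1 = 0 ∧ ∃ ξ : C, q.2 = J ξ w.2} := by
    intro w hw
    ext q
    simp only [Set.mem_insert_iff, Set.mem_setOf_eq, hr]
    constructor
    · rintro (rfl | ⟨h1, h2, hx⟩ | ⟨h1, h2, _⟩)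
      · exact ⟨rfl, 0, by simp⟩
      · exact ⟨h1, hx⟩
      · exact absurd hw h2
    · rintro ⟨h1, ξ, h2⟩
      right; left; exact ⟨h1, hw, ξ, h2⟩
  have hzero : ∀ w : C × V, (0 : C × V) ∈ insert (0 : C × V) {p | r p w} :=
    fun w => Set.mem_insert _ _
  have hself : ∀ w : C × V, w ∈ insert (0 : C × V) {p | r p w} := by
    intro w
    by_cases h : w.1 = 0
    · rw [hL2 w h]; exact ⟨h, e, (hJ1 w.2).symm⟩
    · rw [hL1 w h]; exact (hinvR w.1 h w.2).symm
  have hsub : ∀ w x y : C × V, x ∈ insert (0 : C × V) {p | r p w} →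
      y ∈ insert (0 : C × V) {p | r p w} → x - y ∈ insert (0 : C × V) {p | r p w} := by
    intro w x y hx hy
    by_cases h : w.1 = 0
    · rw [hL2 w h] at hx hy ⊢
      obtain ⟨hx1, ξ, hx2⟩ := hx
      obtain ⟨hy1, η, hy2⟩ := hy
      refine ⟨?_, ξ - η, ?_⟩
      · show x.1 - y.1 = 0
        rw [hx1, hy1, sub_zero]
      · show x.2 - y.2 = J (ξ - η) w.2
        rw [hx2, hy2, map_sub]
        rfl
    · rw [hL1 w h] at hx hy ⊢
      show x.2 - y.2 = J (x.1 - y.1) _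
      rw [hx, hy, map_sub]
      rfl
  have hneg : ∀ w x : C × V, x ∈ insert (0 : C × V) {p | r p w} →
      -x ∈ insert (0 : C × V) {p | r p w} := by
    intro w x hx
    have := hsub w 0 x (hzero w) hx
    simpa using this
  have haddmem : ∀ w x y : C × V, x ∈ insert (0 : C × V) {p | r p w} →
      y ∈ insert (0 : C × V) {p | r p w} → x + y ∈ insert (0 : C × V) {p | r p w} := by
    intro w x y hx hy
    have := hsub w x (-y) hx (hneg w y hy)
    simpa using this
  have hP2 : ∀ w q : C × V, q ∈ insert (0 : C × V) {p | r p w} → q ≠ 0 →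
      insert (0 : C × V) {p | r p q} = insert (0 : C × V) {p | r p w} := by
    intro w q hq hq0
    by_cases h : w.1 = 0
    · rw [hL2 w h] at hq
      obtain ⟨hq1, ξ, hq2⟩ := hq
      have hξ : ξ ≠ 0 := by
        rintro rfl
        exact hq0 (Prod.ext_iff.mpr ⟨hq1, by simpa using hq2⟩)
      rw [hL2 q hq1, hL2 w h]
      ext p
      simp only [Set.mem_setOf_eq]
      constructor
      · rintro ⟨hp1, η, hp2⟩
        obtain ⟨ξ', hξ'⟩ := hJ2 w.2 η ξ
        exact ⟨hp1, ξ', by rw [hp2, hq2, hξ']⟩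
      · rintro ⟨hp1, η, hp2⟩
        have hw2 : w.2 = J ((‖ξ‖ ^ 2)⁻¹ • ((2 * ⟪ξ, e⟫) • e - ξ)) q.2 := by
          rw [hq2, hinvL ξ hξ]
        obtain ⟨ξ', hξ'⟩ := hJ2 q.2 η ((‖ξ‖ ^ 2)⁻¹ • ((2 * ⟪ξ, e⟫) • e - ξ))
        exact ⟨hp1, ξ', by rw [hp2, hw2, hξ']⟩
    · rw [hL1 w h] at hq
      have hq1 : q.1 ≠ 0 := by
        rintro h0
        apply hq0
        refine Prod.ext_iff.mpr ⟨h0, ?_⟩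
        rw [hq, h0]; simp
      rw [hL1 q hq1, hL1 w h]
      have hkeyeq : J ((‖q.1‖ ^ 2)⁻¹ • ((2 * ⟪q.1, e⟫) • e - q.1)) q.2
          = J ((‖w.1‖ ^ 2)⁻¹ • ((2 * ⟪w.1, e⟫) • e - w.1)) w.2 := by
        rw [hq, hinvL q.1 hq1]
      rw [hkeyeq]
  have hinter : ∀ w w' x : C × V,
      insert (0 : C × V) {p | r p w} ≠ insert (0 : C × V) {p | r p w'} →
      x ∈ insert (0 : C × V) {p | r p w} → x ∈ insert (0 : C × V) {p | r p w'} → x = 0 := by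
    intro w w' x hne hx hx'
    by_contra h0
    exact hne ((hP2 w x hx h0).symm.trans (hP2 w' x hx' h0))
  have hnotall : ∀ w : C × V, ∃ z : C × V, z ∉ insert (0 : C × V) {p | r p w} := by
    intro w
    by_cases h : w.1 = 0
    · refine ⟨(e, 0), ?_⟩
      rw [hL2 w h]
      rintro ⟨h1, -⟩
      have hene : e ≠ 0 := by
        intro h'
        rw [h'] at he
        simp at he
      exact hene h1
    · obtain ⟨v₀, hv₀⟩ := exists_ne (0 : V)
      refine ⟨(0, v₀), ?_⟩
      rw [hL1 w h]
      intro hmem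
      simp only [Set.mem_setOf_eq] at hmem
      apply hv₀
      simpa using hmem
  have hcosetsub : ∀ (w' c x y : C × V),
      x ∈ (c + ·) '' insert (0 : C × V) {p | r p w'} →
      y ∈ (c + ·) '' insert (0 : C × V) {p | r p w'} →
      x - y ∈ insert (0 : C × V) {p | r p w'} := by
    rintro w' c x y ⟨a, ha, rfl⟩ ⟨b, hb2, rfl⟩
    have heq : (c + a) - (c + b) = a - b := by abel
    rw [heq]
    exact hsub w' a b ha hb2
  have himg_eq : ∀ (w' c : C × V), c ∈ insert (0 : C × V) {p | r p w'} →
      (c + ·) '' insert (0 : C × V) {p | r p w'} = insert (0 : C × V) {p | r p w'} := by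
    intro w' c hc
    ext x
    constructor
    · rintro ⟨a, ha, rfl⟩
      exact haddmem w' c a hc ha
    · intro hx
      exact ⟨x - c, hsub w' x c hx hc, by show c + (x - c) = x; abel⟩
  -- key additivity for points on distinct lines
  have hkey : ∀ a b : C × V, a ≠ 0 → b ≠ 0 → b ∉ insert (0 : C × V) {p | r p a} →
      g (a + b) = g a + g b := by
    intro a b ha hb hba
    have hLab : insert (0 : C × V) {p | r p a} ≠ insert (0 : C × V) {p | r p b} := by
      intro h
      apply hba
      rw [h]
      exact hself b
    obtain ⟨a', ha'0, ha'⟩ := hglines a ha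
    obtain ⟨b', hb'0, hb'⟩ := hglines b hb
    have Fa : ∀ w₀ x y : C × V, x ∈ ⇑g '' ((w₀ + ·) '' insert (0 : C × V) {p | r p a}) →
        y ∈ ⇑g '' ((w₀ + ·) '' insert (0 : C × V) {p | r p a}) →
        x - y ∈ insert (0 : C × V) {p | r p a'} := by
      intro w₀ x y hx hy
      obtain ⟨c, hc⟩ := ha' w₀
      rw [hc] at hx hy
      exact hcosetsub a' c x y hx hy
    have Fb : ∀ w₀ x y : C × V, x ∈ ⇑g '' ((w₀ + ·) '' insert (0 : C × V) {p | r p b}) →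
        y ∈ ⇑g '' ((w₀ + ·) '' insert (0 : C × V) {p | r p b}) →
        x - y ∈ insert (0 : C × V) {p | r p b'} := by
      intro w₀ x y hx hy
      obtain ⟨c, hc⟩ := hb' w₀
      rw [hc] at hx hy
      exact hcosetsub b' c x y hx hy
    have mem0 : ∀ (w₀ w : C × V), g w₀ ∈ ⇑g '' ((w₀ + ·) '' insert (0 : C × V) {p | r p w}) :=
      fun w₀ w => ⟨w₀ + 0, ⟨0, hzero w, rfl⟩, by rw [add_zero]⟩
    have memself : ∀ (w₀ w : C × V),
        g (w₀ + w) ∈ ⇑g '' ((w₀ + ·) '' insert (0 : C × V) {p | r p w}) :=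
      fun w₀ w => ⟨w₀ + w, ⟨w, hself w, rfl⟩, rfl⟩
    have hga : g a ∈ insert (0 : C × V) {p | r p a'} := by
      have hm := memself 0 a
      rw [zero_add] at hm
      have := Fa 0 (g a) (g 0) hm (mem0 0 a)
      rwa [hg0, sub_zero] at this
    have hgb : g b ∈ insert (0 : C × V) {p | r p b'} := by
      have hm := memself 0 b
      rw [zero_add] at hm
      have := Fb 0 (g b) (g 0) hm (mem0 0 b)
      rwa [hg0, sub_zero] at this
    have hga0 : g a ≠ 0 := fun h => ha (g.injective (h.trans hg0.symm))
    have hgb0 : g b ≠ 0 := fun h => hb (g.injective (h.trans hg0.symm))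
    have hgLa : ⇑g '' insert (0 : C × V) {p | r p a} = insert (0 : C × V) {p | r p a'} := by
      obtain ⟨c, hc⟩ := ha' 0
      have himg : (fun x : C × V => (0 : C × V) + x) '' insert (0 : C × V) {p | r p a}
          = insert (0 : C × V) {p | r p a} := by
        have hid : (fun x : C × V => (0 : C × V) + x) = id := funext fun x => zero_add x
        rw [hid, Set.image_id]
      rw [himg] at hc
      have h0mem : (0 : C × V) ∈ (c + ·) '' insert (0 : C × V) {p | r p a'} := by
        rw [← hc]
        exact ⟨0, hzero a, hg0⟩
      obtain ⟨y, hy, hy0⟩ := h0mem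
      have hcmem : c ∈ insert (0 : C × V) {p | r p a'} := by
        have hcy : c = -y := eq_neg_of_add_eq_zero_left hy0
        rw [hcy]
        exact hneg a' y hy
      rw [hc, himg_eq a' c hcmem]
    have hgLb : ⇑g '' insert (0 : C × V) {p | r p b} = insert (0 : C × V) {p | r p b'} := by
      obtain ⟨c, hc⟩ := hb' 0
      have himg : (fun x : C × V => (0 : C × V) + x) '' insert (0 : C × V) {p | r p b}
          = insert (0 : C × V) {p | r p b} := by
        have hid : (fun x : C × V => (0 : C × V) + x) = id := funext fun x => zero_add x
        rw [hid, Set.image_id]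
      rw [himg] at hc
      have h0mem : (0 : C × V) ∈ (c + ·) '' insert (0 : C × V) {p | r p b'} := by
        rw [← hc]
        exact ⟨0, hzero b, hg0⟩
      obtain ⟨y, hy, hy0⟩ := h0mem
      have hcmem : c ∈ insert (0 : C × V) {p | r p b'} := by
        have hcy : c = -y := eq_neg_of_add_eq_zero_left hy0
        rw [hcy]
        exact hneg b' y hy
      rw [hc, himg_eq b' c hcmem]
    have hLa'ne : insert (0 : C × V) {p | r p a'} ≠ insert (0 : C × V) {p | r p b'} := by
      intro hcontra
      apply hLab
      have himg2 : ⇑g '' insert (0 : C × V) {p | r p a} = ⇑g '' insert (0 : C × V) {p | r p b} :=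
        hgLa.trans (hcontra.trans hgLb.symm)
      exact Set.image_injective.mpr g.injective himg2
    have h1 : g (a + b) - g b ∈ insert (0 : C × V) {p | r p a'} := by
      refine Fa b (g (a + b)) (g b) ?_ (mem0 b a)
      have hm := memself b a
      rwa [add_comm b a] at hm
    have h2 : g (a + b) - g a ∈ insert (0 : C × V) {p | r p b'} :=
      Fb a (g (a + b)) (g a) (memself a b) (mem0 a b)
    have h3 : g (a + b) - g b - g a ∈ insert (0 : C × V) {p | r p a'} := hsub a' _ _ h1 hga
    have h4 : g (a + b) - g a - g b ∈ insert (0 : C × V) {p | r p b'} := hsub b' _ _ h2 hgb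
    have heq3 : g (a + b) - g b - g a = g (a + b) - g a - g b := by abel
    rw [heq3] at h3
    have hz := hinter a' b' _ hLa'ne h3 h4
    have : g (a + b) - (g a + g b) = 0 := by rw [← hz]; abel
    exact sub_eq_zero.mp this
  -- full additivity
  have haddg : ∀ x y : C × V, g (x + y) = g x + g y := by
    intro x y
    rcases eq_or_ne x 0 with rfl | hx
    · rw [zero_add, hg0, zero_add]
    rcases eq_or_ne y 0 with rfl | hy
    · rw [add_zero, hg0, add_zero]
    by_cases hxy : y ∈ insert (0 : C × V) {p | r p x}
    · obtain ⟨z, hz⟩ := hnotall x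
      have hz0 : z ≠ 0 := fun h => hz (by rw [h]; exact hzero x)
      have hLyx : insert (0 : C × V) {p | r p y} = insert (0 : C × V) {p | r p x} :=
        hP2 x y hxy hy
      have hyz0 : y + z ≠ 0 := by
        intro h
        apply hz
        have hzy : z = -y := eq_neg_of_add_eq_zero_right h
        rw [hzy]
        exact hneg x y hxy
      have hyzx : y + z ∉ insert (0 : C × V) {p | r p x} := by
        intro hmem
        apply hz
        have hmm := hsub x (y + z) y hmem hxy
        simpa using hmm
      have hzny : z ∉ insert (0 : C × V) {p | r p y} := by rw [hLyx]; exact hz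
      have e3 : g (y + z) = g y + g z := hkey y z hy hz0 hzny
      rcases eq_or_ne (x + y) 0 with h0 | h0
      · have e2 : g (x + (y + z)) = g x + g (y + z) := hkey x (y + z) hx hyz0 hyzx
        have hxz : x + (y + z) = z := by
          have hyx : y = -x := eq_neg_of_add_eq_zero_right h0
          rw [hyx]; abel
        rw [hxz, e3] at e2
        have hsum : g x + g y = 0 := by
          have h2' : (g x + g y) + g z = 0 + g z := by
            calc (g x + g y) + g z = g x + (g y + g z) := by abel
              _ = g z := e2.symm
              _ = 0 + g z := (zero_add _).symm
          exact add_right_cancel h2'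
        rw [h0, hg0, hsum]
      · have hxyL : x + y ∈ insert (0 : C × V) {p | r p x} := haddmem x x y (hself x) hxy
        have hLxy : insert (0 : C × V) {p | r p (x + y)} = insert (0 : C × V) {p | r p x} :=
          hP2 x (x + y) hxyL h0
        have hzxy : z ∉ insert (0 : C × V) {p | r p (x + y)} := by rw [hLxy]; exact hz
        have e1 : g ((x + y) + z) = g (x + y) + g z := hkey (x + y) z h0 hz0 hzxy
        have e2 : g (x + (y + z)) = g x + g (y + z) := hkey x (y + z) hx hyz0 hyzx
        have hassoc : (x + y) + z = x + (y + z) := add_assoc x y z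
        rw [hassoc, e2, e3] at e1
        have hfin : g (x + y) + g z = (g x + g y) + g z := by rw [← e1]; abel
        exact add_right_cancel hfin
    · exact hkey x y hx hy hxy
  -- conclude linearity from additivity and continuity
  have hcont : Continuous ⇑g := g.continuous
  let f : (C × V) →+ (C × V) := AddMonoidHom.mk' ⇑g haddg
  have hsmul : ∀ (c : ℝ) (x : C × V), g (c • x) = c • g x := by
    intro c x
    have hco := AddMonoidHom.coe_toRealLinearMap f hcont
    have hms := map_smul (f.toRealLinearMap hcont) c x
    rw [hco] at hms
    exact hms
  exact ⟨haddg, hsmul⟩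
end
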